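/- arXiv:2505.16629 — 10 statements merged into one kernel-verified Lean document; each statement's English description precedes it below -/
import Mathlib

section
/- Let f be a positive integer and let α, β, γ be real numbers with α + β + γ = (1 + 4/f)·π. Suppose at least one of α/π, β/π, γ/π is irrational, and suppose (m₁,m₂,m₃) and (n₁,n₂,n₃) are triples of natural numbers satisfying m₁·α + m₂·β + m₃·γ = 2π and n₁·α + n₂·β + n₃·γ = 2π. Then the determinant of the 3×3 real matrix with rows (1,1,1), (m₁,m₂,m₃), (n₁,n₂,n₃) is zero. -/
/-!
The three angle relations form a linear system `M x = v` for `x = (α/π, β/π, γ/π)`, where `M` is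
the integer matrix of the statement and `v = (1 + 4/f, 2, 2)` is rational. If `det M ≠ 0`, then
`x = M⁻¹ v` is computed over `ℚ`, so all three of `α/π, β/π, γ/π` would be rational.
-/

open Matrix

theorem RingHom.eq_comp_mulVec_of_map_mulVec_eq {K L n : Type*} [CommRing K] [Semiring L]
    [Fintype n] [DecidableEq n] (φ : K →+* L) {A : Matrix n n K} (hA : IsUnit A.det) {x : n → L}
    {v : n → K} (h : A.map φ *ᵥ x = φ ∘ v) : x = φ ∘ (A⁻¹ *ᵥ v) := by
  funext i
  calc x i
    _ = ((A⁻¹ * A).map φ *ᵥ x) i := by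
      rw [nonsing_inv_mul A hA, Matrix.map_one _ φ.map_zero φ.map_one, one_mulVec]
    _ = (A⁻¹.map φ *ᵥ (φ ∘ v)) i := by rw [Matrix.map_mul, ← mulVec_mulVec, h]
    _ = φ ((A⁻¹ *ᵥ v) i) := (φ.map_mulVec _ _ i).symm

theorem irrational_angle_lemma_det_general (f : ℕ) (α β γ : ℝ)
    (hsum : α + β + γ = (1 + 4 / (f : ℝ)) * Real.pi)
    (hirr : Irrational (α / Real.pi) ∨ Irrational (β / Real.pi) ∨ Irrational (γ / Real.pi))
    (m₁ m₂ m₃ n₁ n₂ n₃ : ℕ)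
    (hm : (m₁ : ℝ) * α + (m₂ : ℝ) * β + (m₃ : ℝ) * γ = 2 * Real.pi)
    (hn : (n₁ : ℝ) * α + (n₂ : ℝ) * β + (n₃ : ℝ) * γ = 2 * Real.pi) :
    Matrix.det !![(1 : ℝ), 1, 1; (m₁ : ℝ), (m₂ : ℝ), (m₃ : ℝ); (n₁ : ℝ), (n₂ : ℝ), (n₃ : ℝ)] = 0 := by
  by_contra hdet
  set M : Matrix (Fin 3) (Fin 3) ℚ := !![1, 1, 1; (m₁ : ℚ), m₂, m₃; (n₁ : ℚ), n₂, n₃]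
  have hM : M.map (Rat.castHom ℝ) = !![(1 : ℝ), 1, 1; (m₁ : ℝ), m₂, m₃; (n₁ : ℝ), n₂, n₃] := by
    ext i j
    fin_cases i <;> fin_cases j <;> simp [M]
  have hMdet : IsUnit M.det := by
    refine isUnit_iff_ne_zero.mpr fun h => hdet ?_
    rw [← hM, ← RingHom.mapMatrix_apply, ← RingHom.map_det, h, map_zero]
  have hπ := Real.pi_ne_zero
  have hsum' : α / Real.pi + β / Real.pi + γ / Real.pi = 1 + 4 / f := by
    field_simp; linarith
  have hm' : m₁ * (α / Real.pi) + m₂ * (β / Real.pi) + m₃ * (γ / Real.pi) = 2 := by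
    field_simp; linarith
  have hn' : n₁ * (α / Real.pi) + n₂ * (β / Real.pi) + n₃ * (γ / Real.pi) = 2 := by
    field_simp; linarith
  have hsys : M.map (Rat.castHom ℝ) *ᵥ ![α / Real.pi, β / Real.pi, γ / Real.pi] =
      Rat.castHom ℝ ∘ ![1 + 4 / (f : ℚ), 2, 2] := by
    rw [hM]
    ext i
    fin_cases i <;> simp [mulVec, dotProduct, Fin.sum_univ_three, hsum', hm', hn']
  have hrat := (Rat.castHom ℝ).eq_comp_mulVec_of_map_mulVec_eq hMdet hsys
  rcases hirr with h | h | h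
  exacts [h.ne_rat _ (congrFun hrat 0), h.ne_rat _ (congrFun hrat 1), h.ne_rat _ (congrFun hrat 2)]

/-- Determinant form of the Irrational Angle Lemma. -/
theorem irrational_angle_lemma_det (f : ℕ) (hf : 0 < f) (α β γ : ℝ)
    (hsum : α + β + γ = (1 + 4 / (f : ℝ)) * Real.pi)
    (hirr : Irrational (α / Real.pi) ∨ Irrational (β / Real.pi) ∨ Irrational (γ / Real.pi))
    (m₁ m₂ m₃ n₁ n₂ n₃ : ℕ)
    (hm : (m₁ : ℝ) * α + (m₂ : ℝ) * β + (m₃ : ℝ) * γ = 2 * Real.pi)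
    (hn : (n₁ : ℝ) * α + (n₂ : ℝ) * β + (n₃ : ℝ) * γ = 2 * Real.pi) :
    Matrix.det !![(1 : ℝ), 1, 1; (m₁ : ℝ), (m₂ : ℝ), (m₃ : ℝ); (n₁ : ℝ), (n₂ : ℝ), (n₃ : ℝ)] = 0 :=
  irrational_angle_lemma_det_general f α β γ hsum hirr m₁ m₂ m₃ n₁ n₂ n₃ hm hn
end

section
/- Let f be a positive integer and let α, β, γ be real numbers with α + β + γ = (1 + 4/f)·π. Suppose at least one of α/π, β/π, γ/π is irrational, and suppose (m₁,m₂,m₃) and (n₁,n₂,n₃) are triples of natural numbers satisfying m₁·α + m₂·β + m₃·γ = 2π and n₁·α + n₂·β + n₃·γ = 2π, where not all of m₁, m₂, m₃ are equal. Then there exists a real number t such that nᵢ = (1 − t)·mᵢ + t·(2f/(f+4)) for i = 1, 2, 3; that is, (n₁,n₂,n₃) lies on the real line through the points (m₁,m₂,m₃) and (2f/(f+4))·(1,1,1). -/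
/-!
With `c = 2f/(f+4)`, the vertex relations and the angle sum say that the rational vectors
`n - m` and `c • 1 - m` are both orthogonal to `v = (α, β, γ)`. If they were linearly
independent, `v` would be parallel to their cross product, a rational vector, and the angle
sum `v ⬝ᵥ 1 = (1 + 4/f) π` would make every `vᵢ / π` rational. As `m` is not constant,
`c • 1 - m ≠ 0`, so `n - m = t • (c • 1 - m)` for some `t`.
-/

open Matrix

theorem dotProduct_cross_smul_eq_smul_cross_of_dotProduct_eq_zero {R : Type*} [CommRing R]
    {a b v : Fin 3 → R} (ha : a ⬝ᵥ v = 0) (hb : b ⬝ᵥ v = 0) (u : Fin 3 → R) :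
    (u ⬝ᵥ a ⨯₃ b) • v = (v ⬝ᵥ u) • a ⨯₃ b := by
  have hv : v ⨯₃ (a ⨯₃ b) = 0 := by
    rw [cross_cross_eq_smul_sub_smul', dotProduct_comm, hb, ha, zero_smul, zero_smul, sub_zero]
  have := cross_cross_eq_smul_sub_smul' u v (a ⨯₃ b)
  rwa [hv, map_zero, eq_comm, sub_eq_zero] at this

theorem RingHom.comp_cross {R S : Type*} [CommRing R] [CommRing S] (φ : R →+* S)
    (a b : Fin 3 → R) : φ ∘ (a ⨯₃ b) = (φ ∘ a) ⨯₃ (φ ∘ b) := by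
  ext i; fin_cases i <;> simp [cross_apply]

/-- `v` is parallel to the rational vector `a ⨯₃ b`, so unless that vanishes, the rational
coordinate sum `v ⬝ᵥ 1 / x` forces every `v i / x` to be rational. -/
theorem cross_eq_zero_of_irrational {a b : Fin 3 → ℚ} {v : Fin 3 → ℝ} {q : ℚ} {x : ℝ}
    (ha : (Rat.castHom ℝ ∘ a) ⬝ᵥ v = 0) (hb : (Rat.castHom ℝ ∘ b) ⬝ᵥ v = 0)
    (hq : q ≠ 0) (hv : v ⬝ᵥ 1 = q * x) {i : Fin 3} (hi : Irrational (v i / x)) :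
    a ⨯₃ b = 0 := by
  have hx : x ≠ 0 := by rintro rfl; simp at hi
  have hvw := dotProduct_cross_smul_eq_smul_cross_of_dotProduct_eq_zero ha hb 1
  rw [← RingHom.comp_cross, one_dotProduct, hv] at hvw
  set w := a ⨯₃ b
  by_cases hw : ∑ j, w j = 0
  · funext j
    have := congrFun hvw j
    simp [← Rat.cast_sum, hw, hq, hx] at this
    simpa using this
  · refine absurd ⟨q * w i / ∑ j, w j, ?_⟩ hi
    have hw' : ∑ j, (w j : ℝ) ≠ 0 := by exact_mod_cast hw
    have := congrFun hvw i
    simp only [Pi.smul_apply, smul_eq_mul, Function.comp_apply, Rat.coe_castHom] at this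
    push_cast
    rw [div_eq_div_iff hw' hx]
    linear_combination -this

theorem exists_smul_eq_of_cross_eq_zero {K : Type*} [Field K] {a b : Fin 3 → K}
    (h : a ⨯₃ b = 0) (hb : b ≠ 0) : ∃ t : K, t • b = a := by
  by_contra! hne
  exact crossProduct_ne_zero_iff_linearIndependent.2
    ((LinearIndependent.pair_iff' hb).2 hne) (by rw [← cross_anticomm, h, neg_zero])

/-- Line form of the Irrational Angle Lemma. -/
theorem irrational_angle_lemma_line (f : ℕ) (hf : 0 < f) (α β γ : ℝ)
    (hsum : α + β + γ = (1 + 4 / (f : ℝ)) * Real.pi)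
    (hirr : Irrational (α / Real.pi) ∨ Irrational (β / Real.pi) ∨ Irrational (γ / Real.pi))
    (m₁ m₂ m₃ n₁ n₂ n₃ : ℕ)
    (hm : (m₁ : ℝ) * α + (m₂ : ℝ) * β + (m₃ : ℝ) * γ = 2 * Real.pi)
    (hn : (n₁ : ℝ) * α + (n₂ : ℝ) * β + (n₃ : ℝ) * γ = 2 * Real.pi)
    (hne : ¬ (m₁ = m₂ ∧ m₂ = m₃)) :
    ∃ t : ℝ,
      (n₁ : ℝ) = (1 - t) * (m₁ : ℝ) + t * (2 * (f : ℝ) / ((f : ℝ) + 4)) ∧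
      (n₂ : ℝ) = (1 - t) * (m₂ : ℝ) + t * (2 * (f : ℝ) / ((f : ℝ) + 4)) ∧
      (n₃ : ℝ) = (1 - t) * (m₃ : ℝ) + t * (2 * (f : ℝ) / ((f : ℝ) + 4)) := by
  set c : ℚ := 2 * f / (f + 4)
  set v : Fin 3 → ℝ := ![α, β, γ]
  set a : Fin 3 → ℚ := ![n₁ - m₁, n₂ - m₂, n₃ - m₃]
  set b : Fin 3 → ℚ := ![c - m₁, c - m₂, c - m₃]
  have hv : v ⬝ᵥ 1 = ((1 + 4 / f : ℚ) : ℝ) * Real.pi := by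
    simpa [v, dotProduct_one, Fin.sum_univ_three] using hsum
  have ha : (Rat.castHom ℝ ∘ a) ⬝ᵥ v = 0 := by
    rw [vec3_dotProduct]
    simp [a, v]
    linear_combination hn - hm
  have hb : (Rat.castHom ℝ ∘ b) ⬝ᵥ v = 0 := by
    rw [vec3_dotProduct]
    simp [b, v, c]
    have hc : 2 * (f : ℝ) / (f + 4) * (1 + 4 / f) = 2 := by field_simp
    linear_combination 2 * (f : ℝ) / (f + 4) * hsum - hm + Real.pi * hc
  obtain ⟨i, hi⟩ : ∃ i, Irrational (v i / Real.pi) :=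
    hirr.elim (⟨0, ·⟩) fun h => h.elim (⟨1, ·⟩) (⟨2, ·⟩)
  have hab := cross_eq_zero_of_irrational ha hb (by positivity) hv hi
  have hb0 : b ≠ 0 := by
    intro h
    simp [b, funext_iff, Fin.forall_fin_succ, sub_eq_zero] at h
    exact hne ⟨by exact_mod_cast h.1.symm.trans h.2.1, by exact_mod_cast h.2.1.symm.trans h.2.2⟩
  obtain ⟨t, ht⟩ := exists_smul_eq_of_cross_eq_zero hab hb0
  obtain ⟨h₁, h₂, h₃⟩ : t * (c - m₁) = n₁ - m₁ ∧ t * (c - m₂) = n₂ - m₂ ∧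
      t * (c - m₃) = n₃ - m₃ := by
    simpa [a, b, funext_iff, Fin.forall_fin_succ] using ht
  rify [c] at h₁ h₂ h₃
  exact ⟨t, by linarith, by linarith, by linarith⟩
end

section
/- Let A, B, C be linearly independent unit vectors in ℝ³ (EuclideanSpace ℝ (Fin 3)), and let a = ∠(B,C), b = ∠(A,C), c = ∠(A,B) be the angles between the corresponding vectors. Then 0 < a < π, 0 < b < π, 0 < c < π, and the strict triangle inequalities a + b > c, b + c > a, a + c > b hold. -/
open InnerProductGeometry Real
open scoped NNReal

namespace InnerProductGeometry

variable {V ι : Type*} [NormedAddCommGroup V] [InnerProductSpace ℝ V] {v : ι → V}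

lemma angle_pos_of_linearIndependent (hv : LinearIndependent ℝ v) {i j : ι} (hij : i ≠ j) :
    0 < angle (v i) (v j) := by
  refine (angle_nonneg _ _).lt_of_ne fun h ↦ ?_
  obtain ⟨-, r, -, hr⟩ := angle_eq_zero_iff.mp h.symm
  exact (linearIndepOn_pair_iff v hij (hv.ne_zero i)).mp (hv.linearIndepOn _) r hr.symm

lemma angle_lt_pi_of_linearIndependent (hv : LinearIndependent ℝ v) {i j : ι} (hij : i ≠ j) :
    angle (v i) (v j) < π := by
  refine (angle_le_pi _ _).lt_of_ne fun h ↦ ?_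
  obtain ⟨-, r, -, hr⟩ := angle_eq_pi_iff.mp h
  exact (linearIndepOn_pair_iff v hij (hv.ne_zero i)).mp (hv.linearIndepOn _) r hr.symm

/-- Equality in the triangle inequality forces `v i`, `v k` to be antipodal or `v j` to lie in
the cone they span, and both are excluded by linear independence. -/
lemma angle_lt_angle_add_angle_of_linearIndependent (hv : LinearIndependent ℝ v) {i j k : ι}
    (hij : i ≠ j) (hik : i ≠ k) (hjk : j ≠ k) :
    angle (v i) (v k) < angle (v i) (v j) + angle (v j) (v k) := by
  refine (angle_le_angle_add_angle _ _ _).lt_of_ne fun h ↦ ?_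
  rcases (angle_eq_angle_add_angle_iff (hv.ne_zero j)).mp h with hπ | hcone
  · exact (angle_lt_pi_of_linearIndependent hv hik).ne hπ
  · have hj : j ∉ ({i, k} : Set ι) := by simp [hij.symm, hjk]
    refine hv.notMem_span_image hj ?_
    rw [Set.image_pair]
    exact Submodule.span_subset_span ℝ≥0 ℝ _ hcone

end InnerProductGeometry

theorem spherical_triangle_sides_general (A B C : EuclideanSpace ℝ (Fin 3))
    (hind : LinearIndependent ℝ ![A, B, C]) :
    (0 < InnerProductGeometry.angle B C ∧ InnerProductGeometry.angle B C < Real.pi) ∧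
    (0 < InnerProductGeometry.angle A C ∧ InnerProductGeometry.angle A C < Real.pi) ∧
    (0 < InnerProductGeometry.angle A B ∧ InnerProductGeometry.angle A B < Real.pi) ∧
    InnerProductGeometry.angle B C + InnerProductGeometry.angle A C >
      InnerProductGeometry.angle A B ∧
    InnerProductGeometry.angle A C + InnerProductGeometry.angle A B >
      InnerProductGeometry.angle B C ∧
    InnerProductGeometry.angle B C + InnerProductGeometry.angle A B >
      InnerProductGeometry.angle A C := by
  have hAC := angle_lt_angle_add_angle_of_linearIndependent hind
    (i := 0) (j := 1) (k := 2) (by decide) (by decide) (by decide)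
  have hAB := angle_lt_angle_add_angle_of_linearIndependent hind
    (i := 0) (j := 2) (k := 1) (by decide) (by decide) (by decide)
  have hBC := angle_lt_angle_add_angle_of_linearIndependent hind
    (i := 1) (j := 0) (k := 2) (by decide) (by decide) (by decide)
  simp only [Matrix.cons_val_zero, Matrix.cons_val_one, Matrix.cons_val_two, Matrix.head_cons,
    Matrix.tail_cons] at hAC hAB hBC
  rw [angle_comm C B] at hAB
  rw [angle_comm B A] at hBC
  refine ⟨⟨?_, ?_⟩, ⟨?_, ?_⟩, ⟨?_, ?_⟩, by linarith, by linarith, by linarith⟩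
  · exact angle_pos_of_linearIndependent hind (i := 1) (j := 2) (by decide)
  · exact angle_lt_pi_of_linearIndependent hind (i := 1) (j := 2) (by decide)
  · exact angle_pos_of_linearIndependent hind (i := 0) (j := 2) (by decide)
  · exact angle_lt_pi_of_linearIndependent hind (i := 0) (j := 2) (by decide)
  · exact angle_pos_of_linearIndependent hind (i := 0) (j := 1) (by decide)
  · exact angle_lt_pi_of_linearIndependent hind (i := 0) (j := 1) (by decide)

/-- The sides of a convex spherical triangle lie in `(0, π)` and satisfy the strict
triangle inequalities. -/
theorem spherical_triangle_sides (A B C : EuclideanSpace ℝ (Fin 3))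
    (hind : LinearIndependent ℝ ![A, B, C])
    (hA : ‖A‖ = 1) (hB : ‖B‖ = 1) (hC : ‖C‖ = 1) :
    (0 < InnerProductGeometry.angle B C ∧ InnerProductGeometry.angle B C < Real.pi) ∧
    (0 < InnerProductGeometry.angle A C ∧ InnerProductGeometry.angle A C < Real.pi) ∧
    (0 < InnerProductGeometry.angle A B ∧ InnerProductGeometry.angle A B < Real.pi) ∧
    InnerProductGeometry.angle B C + InnerProductGeometry.angle A C >
      InnerProductGeometry.angle A B ∧
    InnerProductGeometry.angle A C + InnerProductGeometry.angle A B >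
      InnerProductGeometry.angle B C ∧
    InnerProductGeometry.angle B C + InnerProductGeometry.angle A B >
      InnerProductGeometry.angle A C :=
  spherical_triangle_sides_general A B C hind
end

section
/- Let A, B, C be linearly independent unit vectors in ℝ³ (EuclideanSpace ℝ (Fin 3)). Define the corner angle at A as α = ∠(B − ⟪B,A⟫A, C − ⟪C,A⟫A), the angle between the orthogonal projections of B and C onto the tangent plane at A, and define the corner angles β at B and γ at C analogously. Then 0 < α < π, 0 < β < π, 0 < γ < π, and α + β < π + γ, β + γ < π + α, α + γ < π + β. -/
/-!
The normals `n_A = B × C`, `n_B = C × A`, `n_C = A × B` are the vertices of the polar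
triangle. For a unit vector `X`, the inner products of `X × Y` and `X × Z` are those of the
projections of `Y` and `Z` onto `Xᗮ`, so each corner angle is `π` minus the angle between two normals. The normals are
linearly independent, since `⟪A, n_A⟫ = det (A, B, C) ≠ 0` while `⟪A, n_B⟫ = ⟪A, n_C⟫ = 0`, and
so on. All six claims then follow from the strict triangle inequality for angles between
linearly independent vectors, together with `angle < π` for independent pairs.
-/

open scoped RealInnerProductSpace

/-- The corner angle of the spherical triangle with vertices `A`, `B`, `C` at the
vertex `A`: the angle between the orthogonal projections of `B` and `C` onto the
tangent plane of the unit sphere at `A`. -/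
noncomputable def cornerAngle (A B C : EuclideanSpace ℝ (Fin 3)) : ℝ :=
  InnerProductGeometry.angle (B - ⟪B, A⟫ • A) (C - ⟪C, A⟫ • A)

section LinearIndependentTriple

variable {R M : Type*} [Ring R] [AddCommGroup M] [Module R M] {x y z : M}

theorem LinearIndependent.triple_iff : LinearIndependent R ![x, y, z] ↔
    ∀ a b c : R, a • x + b • y + c • z = 0 → a = 0 ∧ b = 0 ∧ c = 0 := by
  simp [Fintype.linearIndependent_iff, Fin.sum_univ_three, Fin.forall_fin_succ,
    Fin.forall_fin_succ_pi, Fin.forall_fin_zero_pi, add_assoc]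

theorem LinearIndependent.triple_rotate (h : LinearIndependent R ![x, y, z]) :
    LinearIndependent R ![y, z, x] :=
  triple_iff.2 fun a b c habc ↦ by
    obtain ⟨hc, ha, hb⟩ := triple_iff.1 h c a b (by rw [← habc]; abel)
    exact ⟨ha, hb, hc⟩

theorem LinearIndependent.pair_of_triple (h : LinearIndependent R ![x, y, z]) :
    LinearIndependent R ![x, z] :=
  pair_iff.2 fun a c hac ↦ by
    obtain ⟨ha, -, hc⟩ := triple_iff.1 h a 0 c (by simpa using hac)
    exact ⟨ha, hc⟩

end LinearIndependentTriple

namespace InnerProductGeometry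

variable {V : Type*} [NormedAddCommGroup V] [InnerProductSpace ℝ V] {x y z : V}

theorem angle_lt_pi_of_linearIndependent_s3 (h : LinearIndependent ℝ ![x, y]) :
    angle x y < Real.pi := by
  refine (angle_le_pi x y).lt_of_ne fun hπ ↦ ?_
  obtain ⟨-, r, -, rfl⟩ := angle_eq_pi_iff.1 hπ
  simpa using (LinearIndependent.pair_iff.1 h r (-1) (by simp))

theorem angle_lt_angle_add_angle_of_linearIndependent_s3 (h : LinearIndependent ℝ ![x, y, z]) :
    angle x z < angle x y + angle y z := by
  refine (angle_le_angle_add_angle x y z).lt_of_ne fun heq ↦ ?_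
  rcases (angle_eq_angle_add_angle_iff (h.ne_zero 1)).1 heq with hπ | hcone
  · exact (angle_lt_pi_of_linearIndependent_s3 h.pair_of_triple).ne hπ
  · obtain ⟨a, c, hy⟩ := Submodule.mem_span_pair.1 hcone
    have hy : (a : ℝ) • x + (c : ℝ) • z = y := hy
    simpa using LinearIndependent.triple_iff.1 h a (-1) c (by rw [← hy]; module)

theorem angle_eq_angle_of_inner_eq {W : Type*} [NormedAddCommGroup W] [InnerProductSpace ℝ W]
    {u v : V} {u' v' : W} (huv : ⟪u, v⟫ = ⟪u', v'⟫) (hu : ⟪u, u⟫ = ⟪u', u'⟫)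
    (hv : ⟪v, v⟫ = ⟪v', v'⟫) : angle u v = angle u' v' := by
  rw [angle, angle, norm_eq_sqrt_real_inner u, norm_eq_sqrt_real_inner v, hu, hv, huv,
    ← norm_eq_sqrt_real_inner, ← norm_eq_sqrt_real_inner]

theorem inner_sub_inner_smul_sub_inner_smul {e : V} (he : ‖e‖ = 1) (y z : V) :
    ⟪y - ⟪y, e⟫ • e, z - ⟪z, e⟫ • e⟫ = ⟪y, z⟫ - ⟪y, e⟫ * ⟪z, e⟫ := by
  simp only [inner_sub_left, inner_sub_right, real_inner_smul_left, real_inner_smul_right,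
    inner_self_eq_one_of_norm_eq_one he, real_inner_comm e]
  ring

end InnerProductGeometry

namespace EuclideanSpace

open WithLp Matrix

noncomputable def cross (a b : EuclideanSpace ℝ (Fin 3)) : EuclideanSpace ℝ (Fin 3) :=
  toLp 2 (ofLp a ⨯₃ ofLp b)

variable (a b c d : EuclideanSpace ℝ (Fin 3))

theorem inner_eq_dotProduct : ⟪a, b⟫ = ofLp a ⬝ᵥ ofLp b := by
  rw [inner_eq_star_dotProduct, star_trivial, dotProduct_comm]

theorem cross_anticomm : -cross a b = cross b a := by
  rw [cross, cross, ← toLp_neg, _root_.cross_anticomm]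

theorem inner_cross_cross : ⟪cross a b, cross c d⟫ = ⟪a, c⟫ * ⟪b, d⟫ - ⟪a, d⟫ * ⟪b, c⟫ := by
  simp only [inner_eq_dotProduct, cross, cross_dot_cross]

theorem inner_self_cross : ⟪a, cross a b⟫ = 0 := by
  rw [inner_eq_dotProduct, cross, ofLp_toLp, dot_self_cross]

theorem inner_cross_self : ⟪b, cross a b⟫ = 0 := by
  rw [inner_eq_dotProduct, cross, ofLp_toLp, dot_cross_self]

theorem inner_cross_rotate : ⟪a, cross b c⟫ = ⟪b, cross c a⟫ := by
  rw [inner_eq_dotProduct, inner_eq_dotProduct, cross, cross, ofLp_toLp, ofLp_toLp,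
    triple_product_permutation]

variable {a b c}

theorem inner_cross_ne_zero_of_linearIndependent (h : LinearIndependent ℝ ![a, b, c]) :
    ⟪a, cross b c⟫ ≠ 0 := by
  have hrows : LinearIndependent ℝ ![ofLp a, ofLp b, ofLp c] :=
    LinearIndependent.triple_iff.2 fun r s t hrst ↦
      LinearIndependent.triple_iff.1 h r s t (by simpa using congrArg (toLp 2) hrst)
  rw [inner_eq_dotProduct, cross, ofLp_toLp, triple_product_eq_det]
  exact ((isUnit_iff_isUnit_det _).1 (linearIndependent_rows_iff_isUnit.1 hrows)).ne_zero

theorem linearIndependent_cross (h : LinearIndependent ℝ ![a, b, c]) :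
    LinearIndependent ℝ ![cross b c, cross c a, cross a b] := by
  have ht := inner_cross_ne_zero_of_linearIndependent h
  refine LinearIndependent.triple_iff.2 fun r s t hrst ↦ ?_
  have hA := congrArg (⟪a, ·⟫) hrst
  have hB := congrArg (⟪b, ·⟫) hrst
  have hC := congrArg (⟪c, ·⟫) hrst
  simp only [inner_add_right, real_inner_smul_right, inner_self_cross, inner_cross_self,
    inner_zero_right] at hA hB hC
  rw [← inner_cross_rotate] at hB
  rw [← inner_cross_rotate, ← inner_cross_rotate] at hC
  simp_all

end EuclideanSpace

open InnerProductGeometry EuclideanSpace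

theorem cornerAngle_eq_angle_cross {X : EuclideanSpace ℝ (Fin 3)} (hX : ‖X‖ = 1)
    (Y Z : EuclideanSpace ℝ (Fin 3)) : cornerAngle X Y Z = angle (cross X Y) (cross X Z) := by
  rw [cornerAngle]
  have hXX : ⟪X, X⟫ = 1 := inner_self_eq_one_of_norm_eq_one hX
  refine angle_eq_angle_of_inner_eq ?_ ?_ ?_ <;>
    rw [inner_sub_inner_smul_sub_inner_smul hX, inner_cross_cross, hXX] <;>
    simp only [real_inner_comm X] <;> ring

/-- The corner angles of a convex spherical triangle lie in `(0, π)` and satisfy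
`α + β < π + γ` together with its cyclic variants. -/
theorem spherical_triangle_angles (A B C : EuclideanSpace ℝ (Fin 3))
    (hind : LinearIndependent ℝ ![A, B, C])
    (hA : ‖A‖ = 1) (hB : ‖B‖ = 1) (hC : ‖C‖ = 1) :
    (0 < cornerAngle A B C ∧ cornerAngle A B C < Real.pi) ∧
    (0 < cornerAngle B A C ∧ cornerAngle B A C < Real.pi) ∧
    (0 < cornerAngle C A B ∧ cornerAngle C A B < Real.pi) ∧
    cornerAngle A B C + cornerAngle B A C < Real.pi + cornerAngle C A B ∧
    cornerAngle B A C + cornerAngle C A B < Real.pi + cornerAngle A B C ∧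
    cornerAngle A B C + cornerAngle C A B < Real.pi + cornerAngle B A C := by
  have hABC := linearIndependent_cross hind
  have hBCA := hABC.triple_rotate
  have hCAB := hBCA.triple_rotate
  set nA := cross B C
  set nB := cross C A
  set nC := cross A B
  have hα : cornerAngle A B C = Real.pi - angle nC nB := by
    rw [cornerAngle_eq_angle_cross hA, ← EuclideanSpace.cross_anticomm C A, angle_neg_right]
  have hβ : cornerAngle B A C = Real.pi - angle nC nA := by
    rw [cornerAngle_eq_angle_cross hB, ← EuclideanSpace.cross_anticomm A B, angle_neg_left]
  have hγ : cornerAngle C A B = Real.pi - angle nB nA := by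
    rw [cornerAngle_eq_angle_cross hC, ← EuclideanSpace.cross_anticomm B C, angle_neg_right]
  have hviaB : angle nA nC < angle nA nB + angle nB nC :=
    angle_lt_angle_add_angle_of_linearIndependent_s3 hABC
  have hviaC : angle nB nA < angle nB nC + angle nC nA :=
    angle_lt_angle_add_angle_of_linearIndependent_s3 hBCA
  have hviaA : angle nC nB < angle nC nA + angle nA nB :=
    angle_lt_angle_add_angle_of_linearIndependent_s3 hCAB
  have hAC : angle nA nC < Real.pi := angle_lt_pi_of_linearIndependent_s3 hABC.pair_of_triple
  have hBA : angle nB nA < Real.pi := angle_lt_pi_of_linearIndependent_s3 hBCA.pair_of_triple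
  have hCB : angle nC nB < Real.pi := angle_lt_pi_of_linearIndependent_s3 hCAB.pair_of_triple
  rw [hα, hβ, hγ]
  -- `angle nX nY > 0` (i.e. each corner angle `< π`) follows from adding two of the three
  -- strict triangle inequalities.
  refine ⟨⟨?_, ?_⟩, ⟨?_, ?_⟩, ⟨?_, ?_⟩, ?_, ?_, ?_⟩ <;>
    linarith [angle_comm nA nB, angle_comm nB nC, angle_comm nC nA]
end

section
/- Let v, h : ℕ → ℕ be finitely supported functions with v(k) = 0 for all k < 2 and h(l) = 0 for all l < 1, let V = Σₖ v(k) and H = Σₗ h(l), and let f be a natural number such that 3f = Σₖ k·v(k) + Σₗ l·h(l) and f + 4 = 2V + H. Then 3f + 2v(2) + h(1) = 12 + Σ_{k≥4} 2(k−3)·v(k) + Σ_{l≥2} (2l−3)·h(l). -/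
/-!
Subtract three times the Euler identity from twice the corner count: a full vertex of degree `k`
contributes `2k − 6` and a half vertex of degree `l` contributes `2l − 3`, so the contributions sum
to `6f − 3(f + 4) = 3f − 12`. The only negative ones come from `v 2` and `h 1`; moving them to the
left gives the identity in `ℕ`.
-/
theorem Finsupp.sum_filter_add_mul_sum_of_forall (v : ℕ →₀ ℕ) (p : ℕ → Prop) [DecidablePred p]
    (g : ℕ → ℕ) (a b c j : ℕ)
    (hterm : ∀ k ∈ v.support, (if p k then g k * v k else 0) + a * v k =
      b * (k * v k) + c * (if k = j then v k else 0)) :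
    (∑ k ∈ v.support.filter p, g k * v k) + a * (v.sum fun _ n => n) =
      b * (v.sum fun k n => k * n) + c * v j := by
  rw [Finset.sum_filter, Finsupp.mul_sum, Finsupp.mul_sum, ← Finsupp.sum_ite_self_eq' v j,
    Finsupp.mul_sum]
  unfold Finsupp.sum
  rw [← Finset.sum_add_distrib, ← Finset.sum_add_distrib]
  exact Finset.sum_congr rfl hterm

theorem full_vertex_weight_add {k : ℕ} (hk : 2 ≤ k) (n : ℕ) :
    (if 4 ≤ k then 2 * (k - 3) * n else 0) + 6 * n =
      2 * (k * n) + 2 * (if k = 2 then n else 0) := by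
  by_cases h4 : 4 ≤ k
  · obtain ⟨m, rfl⟩ : ∃ m, k = m + 3 := ⟨k - 3, by omega⟩
    simp only [h4, if_true, show m + 3 ≠ 2 by omega, if_false, Nat.add_sub_cancel]
    ring
  · interval_cases k <;> split_ifs <;> omega

theorem half_vertex_weight_add {l : ℕ} (hl : 1 ≤ l) (n : ℕ) :
    (if 2 ≤ l then (2 * l - 3) * n else 0) + 3 * n = 2 * (l * n) + (if l = 1 then n else 0) := by
  by_cases h2 : 2 ≤ l
  · obtain ⟨m, rfl⟩ : ∃ m, l = m + 2 := ⟨l - 2, by omega⟩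
    simp only [h2, if_true, show m + 2 ≠ 1 by omega, if_false,
      show 2 * (m + 2) - 3 = 2 * m + 1 by omega]
    ring
  · interval_cases l; split_ifs <;> omega

theorem Finsupp.le_of_mem_support_of_forall_lt {M : Type*} [Zero M] {f : ℕ →₀ M} {m k : ℕ}
    (hf : ∀ i < m, f i = 0) (hk : k ∈ f.support) : m ≤ k := by
  by_contra! hkm
  exact Finsupp.mem_support_iff.mp hk (hf k hkm)

/-- Equation (4): vertex-degree counting identity for non-side-to-side tilings. -/
theorem vertex_count_eq4 (v h : ℕ →₀ ℕ)
    (hv : ∀ k < 2, v k = 0) (hh : ∀ l < 1, h l = 0)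
    (f : ℕ)
    (hcorner : 3 * f = (v.sum fun k n => k * n) + (h.sum fun l n => l * n))
    (heuler : f + 4 = 2 * (v.sum fun _ n => n) + (h.sum fun _ n => n)) :
    3 * f + 2 * v 2 + h 1 =
      12 + (∑ k ∈ v.support.filter (fun k => 4 ≤ k), 2 * (k - 3) * v k)
         + (∑ l ∈ h.support.filter (fun l => 2 ≤ l), (2 * l - 3) * h l) := by
  have hfull := v.sum_filter_add_mul_sum_of_forall (4 ≤ ·) (fun k => 2 * (k - 3)) 6 2 2 2
    fun k hk => full_vertex_weight_add (Finsupp.le_of_mem_support_of_forall_lt hv hk) (v k)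
  have hhalf := h.sum_filter_add_mul_sum_of_forall (2 ≤ ·) (fun l => 2 * l - 3) 3 2 1 1
    fun l hl => by
      rw [one_mul]
      exact half_vertex_weight_add (Finsupp.le_of_mem_support_of_forall_lt hh hl) (h l)
  omega
end

section
/- Let v, h : ℕ → ℕ be finitely supported functions with v(k) = 0 for all k ≤ 2 and h(l) = 0 for all l ≤ 1, let V = Σₖ v(k) and H = Σₗ h(l), and let f be a natural number such that 3f = Σₖ k·v(k) + Σₗ l·h(l), f + 4 = 2V + H, and H ≥ 1. Then f ≥ 5 and 3v(3) + 2v(4) + v(5) + h(2) ≥ 12. -/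
/-!
Eliminating `f` between the corner count and Euler's identity gives the curvature identity
`Σ (6 - k) v(k) + Σ (3 - l) h(l) = 12` (over `ℤ`); since `v(k) = 0` for `k ≤ 2` and `h(l) = 0`
for `l ≤ 1`, only `v(3), v(4), v(5), h(2)` contribute positively, with weights `3, 2, 1, 1`.
Similarly `3f ≥ 3V + 2H` together with `f + 4 = 2V + H` gives `3f ≥ 12 + H > 12`.
-/

lemma Finsupp.mul_sum_le_sum_mul_add_sum_range (v : ℕ →₀ ℕ) (m : ℕ) :
    m * (v.sum fun _ n => n) ≤
      (v.sum fun k n => k * n) + ∑ k ∈ Finset.range m, (m - k) * v k := by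
  have hdeficit : ∑ k ∈ v.support, (m - k) * v k ≤ ∑ k ∈ Finset.range m, (m - k) * v k := by
    rw [← Finset.sum_filter_of_ne (p := (· < m)) fun k _ hk => by
      by_contra hkm
      exact hk (by rw [Nat.sub_eq_zero_of_le (not_lt.mp hkm), zero_mul])]
    exact Finset.sum_le_sum_of_subset fun k hk => Finset.mem_range.mpr (Finset.mem_filter.mp hk).2
  calc m * (v.sum fun _ n => n)
      ≤ ∑ k ∈ v.support, (k * v k + (m - k) * v k) := by
        rw [Finsupp.sum, Finset.mul_sum]
        refine Finset.sum_le_sum fun k _ => ?_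
        rw [← add_mul]
        exact Nat.mul_le_mul_right _ (by omega)
    _ ≤ _ := by
        rw [Finset.sum_add_distrib]
        exact Nat.add_le_add_left hdeficit _

/-- In a non-side-to-side tiling by congruent scalene convex triangles, `f ≥ 5` and a
full vertex of degree 3, 4, 5 or a half vertex of degree 2 must appear. -/
theorem small_vertex_must_appear (v h : ℕ →₀ ℕ)
    (hv : ∀ k ≤ 2, v k = 0) (hh : ∀ l ≤ 1, h l = 0)
    (f : ℕ)
    (hcorner : 3 * f = (v.sum fun k n => k * n) + (h.sum fun l n => l * n))
    (heuler : f + 4 = 2 * (v.sum fun _ n => n) + (h.sum fun _ n => n))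
    (hH : 1 ≤ h.sum fun _ n => n) :
    5 ≤ f ∧ 12 ≤ 3 * v 3 + 2 * v 4 + v 5 + h 2 := by
  obtain ⟨hv0, hv1, hv2⟩ : v 0 = 0 ∧ v 1 = 0 ∧ v 2 = 0 :=
    ⟨hv 0 (by norm_num), hv 1 (by norm_num), hv 2 (by norm_num)⟩
  obtain ⟨hh0, hh1⟩ : h 0 = 0 ∧ h 1 = 0 := ⟨hh 0 (by norm_num), hh 1 (by norm_num)⟩
  have hv_three := v.mul_sum_le_sum_mul_add_sum_range 3
  have hv_six := v.mul_sum_le_sum_mul_add_sum_range 6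
  have hh_two := h.mul_sum_le_sum_mul_add_sum_range 2
  have hh_three := h.mul_sum_le_sum_mul_add_sum_range 3
  simp only [Finset.sum_range_succ, Finset.sum_range_zero] at hv_three hv_six hh_two hh_three
  omega
end

section
/- Let f be a positive integer and let α, β, γ be real numbers with α = 2π/3, β > γ > 0, and α + β + γ = (1 + 4/f)·π. Suppose at least one of α/π, β/π, γ/π is irrational, and let n₁, n₂, n₃ be natural numbers with n₁·α + n₂·β + n₃·γ = 2π. Then n₂ = n₃ and n₂ ≤ 5. -/
/-!
Measured in units of `π`, the angle sum makes `β/π + γ/π` rational while `α/π = 2/3` is rational, so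
the irrationality hypothesis forces both `β/π` and `γ/π` to be irrational. In a vertex relation
`n₂ β/π + n₃ γ/π ∈ ℚ`, eliminating `γ/π` leaves `(n₂ - n₃) β/π ∈ ℚ`, hence `n₂ = n₃`. Then
`n₂ (β + γ) = 2π - n₁ α ≤ 2π` together with `β + γ > π/3` gives `n₂ < 6`.
-/

open Real

theorem Irrational.of_add_eq_ratCast_left {x y : ℝ} {s : ℚ} (hy : Irrational y) (hxy : x + y = s) :
    Irrational x := by
  rw [eq_sub_of_add_eq hxy]
  exact hy.ratCast_sub s

theorem coeff_eq_of_irrational_of_add_eq_ratCast {x y : ℝ} {s r m n : ℚ} (hx : Irrational x)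
    (hxy : x + y = s) (h : m * x + n * y = r) : m = n := by
  by_contra hmn
  have hmn' : ((m : ℝ) - n) ≠ 0 := by exact_mod_cast sub_ne_zero.mpr hmn
  apply hx
  refine ⟨(r - n * s) / (m - n), ?_⟩
  push_cast
  rw [div_eq_iff hmn']
  linear_combination (-1 : ℝ) * h + (n : ℝ) * hxy

theorem Nat.le_five_of_mul_le_two {n : ℕ} {t : ℝ} (ht : 1 / 3 < t) (h : n * t ≤ 2) : n ≤ 5 := by
  by_contra! hn
  have : (6 : ℝ) ≤ n := by exact_mod_cast hn
  nlinarith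

theorem case_alpha_cubed_general (f : ℕ) (hf : 0 < f) (α β γ : ℝ)
    (hα : α = 2 * Real.pi / 3)
    (hsum : α + β + γ = (1 + 4 / (f : ℝ)) * Real.pi)
    (hirr : Irrational (α / Real.pi) ∨ Irrational (β / Real.pi) ∨ Irrational (γ / Real.pi))
    (n₁ n₂ n₃ : ℕ)
    (hvertex : (n₁ : ℝ) * α + (n₂ : ℝ) * β + (n₃ : ℝ) * γ = 2 * Real.pi) :
    n₂ = n₃ ∧ n₂ ≤ 5 := by
  have hπ : π ≠ 0 := pi_ne_zero
  have hα_rat : α / π = ((2 / 3 : ℚ) : ℝ) := by rw [hα]; push_cast; field_simp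
  have hsum_rat : β / π + γ / π = ((1 / 3 + 4 / f : ℚ) : ℝ) := by
    rw [← add_div, div_eq_iff hπ]; push_cast; linear_combination hsum - hα
  have hvertex_rat : (n₂ : ℚ) * (β / π) + (n₃ : ℚ) * (γ / π) = ((2 - n₁ * (2 / 3) : ℚ) : ℝ) := by
    rw [mul_div_assoc', mul_div_assoc', ← add_div, div_eq_iff hπ]; push_cast
    linear_combination hvertex - n₁ * hα
  have hβ_irr : Irrational (β / π) := by
    rcases hirr with h | h | h
    · exact absurd (hα_rat ▸ h) (Rat.not_irrational _)
    · exact h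
    · exact h.of_add_eq_ratCast_left hsum_rat
  have hn : n₂ = n₃ := by
    exact_mod_cast coeff_eq_of_irrational_of_add_eq_ratCast hβ_irr hsum_rat hvertex_rat
  subst hn
  refine ⟨rfl, Nat.le_five_of_mul_le_two (t := β / π + γ / π) ?_ ?_⟩
  · rw [hsum_rat]; push_cast
    have : (0 : ℝ) < 4 / f := by positivity
    linarith
  · have : (0 : ℝ) ≤ n₁ := n₁.cast_nonneg
    push_cast at hvertex_rat
    linear_combination hvertex_rat + (2 / 3) * this

/-- Case `α³` of the Irrational Angle Lemma: every vertex satisfies `n₂ = n₃ ≤ 5`. -/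
theorem case_alpha_cubed (f : ℕ) (hf : 0 < f) (α β γ : ℝ)
    (hα : α = 2 * Real.pi / 3) (hβγ : β > γ) (hγ : γ > 0)
    (hsum : α + β + γ = (1 + 4 / (f : ℝ)) * Real.pi)
    (hirr : Irrational (α / Real.pi) ∨ Irrational (β / Real.pi) ∨ Irrational (γ / Real.pi))
    (n₁ n₂ n₃ : ℕ)
    (hvertex : (n₁ : ℝ) * α + (n₂ : ℝ) * β + (n₃ : ℝ) * γ = 2 * Real.pi) :
    n₂ = n₃ ∧ n₂ ≤ 5 :=
  case_alpha_cubed_general f hf α β γ hα hsum hirr n₁ n₂ n₃ hvertex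
end

section
/- Let f be a positive integer and let α, β, γ be real numbers with 2α + β = 2π and α + β + γ = (1 + 4/f)·π. Suppose at least one of α/π, β/π, γ/π is irrational, and let n₁, n₂, n₃ be natural numbers with n₁·α + n₂·β + n₃·γ = 2π. Then 2n₂ = n₁ + n₃. -/
/-!
Dividing by `π`, the angles become `a = α/π`, `b = β/π`, `c = γ/π` with `2a + b` and `a + b + c`
rational. Hence `b` and `c` are rational whenever `a` is, so the irrationality hypothesis forces `a`
to be irrational. Eliminating `b` and `c` from the vertex equation leaves
`(n₁ + n₃ - 2n₂) a ∈ ℚ`, and an irrational number has no nonzero integer multiple in `ℚ`.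
-/

theorem Irrational.eq_zero_of_intCast_mul_eq_ratCast {x : ℝ} (hx : Irrational x) {m : ℤ} {q : ℚ}
    (h : (m : ℝ) * x = q) : m = 0 := by
  by_contra hm
  exact (hx.intCast_mul hm).ne_rat q h

theorem irrational_of_two_mul_add_eq_ratCast_of_add_add_eq_ratCast {a b c : ℝ} {r s : ℚ}
    (hab : 2 * a + b = r) (habc : a + b + c = s)
    (h : Irrational a ∨ Irrational b ∨ Irrational c) : Irrational a := by
  rintro ⟨q, rfl⟩
  have hb : b = ((r - 2 * q : ℚ) : ℝ) := by push_cast; linarith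
  have hc : c = ((s - r + q : ℚ) : ℝ) := by push_cast; linarith
  rcases h with h | h | h
  · exact Rat.not_irrational q h
  · exact Rat.not_irrational _ (hb ▸ h)
  · exact Rat.not_irrational _ (hc ▸ h)

theorem case_alpha_sq_beta_general (f : ℕ) (α β γ : ℝ)
    (hαβ : 2 * α + β = 2 * Real.pi)
    (hsum : α + β + γ = (1 + 4 / (f : ℝ)) * Real.pi)
    (hirr : Irrational (α / Real.pi) ∨ Irrational (β / Real.pi) ∨ Irrational (γ / Real.pi))
    (n₁ n₂ n₃ : ℕ)
    (hvertex : (n₁ : ℝ) * α + (n₂ : ℝ) * β + (n₃ : ℝ) * γ = 2 * Real.pi) :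
    2 * n₂ = n₁ + n₃ := by
  have hπ : Real.pi ≠ 0 := Real.pi_ne_zero
  have hab : 2 * (α / Real.pi) + β / Real.pi = ((2 : ℚ) : ℝ) := by
    field_simp; push_cast; linarith
  have habc : α / Real.pi + β / Real.pi + γ / Real.pi = ((1 + 4 / f : ℚ) : ℝ) := by
    field_simp; push_cast; linarith
  have hv : n₁ * (α / Real.pi) + n₂ * (β / Real.pi) + n₃ * (γ / Real.pi) = 2 := by
    field_simp; linarith
  have ha := irrational_of_two_mul_add_eq_ratCast_of_add_add_eq_ratCast hab habc hirr
  have hcoeff : ((n₁ + n₃ - 2 * n₂ : ℤ) : ℝ) * (α / Real.pi)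
      = ((2 - 2 * n₂ - n₃ * (4 / f - 1) : ℚ) : ℝ) := by
    push_cast at hab habc ⊢
    linear_combination hv - (n₂ - n₃ : ℝ) * hab - n₃ * habc
  have hcoeff_zero := ha.eq_zero_of_intCast_mul_eq_ratCast hcoeff
  omega

/-- Case `α²β` of the Irrational Angle Lemma: every vertex satisfies `2n₂ = n₁ + n₃`. -/
theorem case_alpha_sq_beta (f : ℕ) (hf : 0 < f) (α β γ : ℝ)
    (hαβ : 2 * α + β = 2 * Real.pi)
    (hsum : α + β + γ = (1 + 4 / (f : ℝ)) * Real.pi)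
    (hirr : Irrational (α / Real.pi) ∨ Irrational (β / Real.pi) ∨ Irrational (γ / Real.pi))
    (n₁ n₂ n₃ : ℕ)
    (hvertex : (n₁ : ℝ) * α + (n₂ : ℝ) * β + (n₃ : ℝ) * γ = 2 * Real.pi) :
    2 * n₂ = n₁ + n₃ :=
  case_alpha_sq_beta_general f α β γ hαβ hsum hirr n₁ n₂ n₃ hvertex
end

section
/- Let A = (0, 0, 1), B = (√2/2, 0, √2/2), C = (−√2/2, √2/2, 0) in ℝ³ (EuclideanSpace ℝ (Fin 3)). Then A, B, C are unit vectors; the side lengths of the spherical triangle with vertices A, B, C are ∠(B,C) = 2π/3, ∠(A,C) = π/2, ∠(A,B) = π/4; and its corner angles are 3π/4 at A, arctan √2 at B, and π/2 − arctan √2 at C. -/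
/-!
Everything is determined by the Gram matrix of `A, B, C`: `⟪A, B⟫ = √2/2`, `⟪A, C⟫ = 0`,
`⟪B, C⟫ = -1/2`. The sides are the arccosines of these inner products, and by the spherical
law of cosines the cosine of the corner angle at `A` is `(⟪B, C⟫ - ⟪A, B⟫⟪A, C⟫) / (sin c sin b)`,
which gives `-√2/2`, `1/√3` and `√2/√3` at `A`, `B` and `C`; finally
`arctan √2 = arccos (1/√3) = π/2 - arcsin (√2/√3)`.
-/

open scoped RealInnerProductSpace

open Real InnerProductGeometry

namespace Real

theorem arccos_neg_one_half : arccos (-(1 / 2)) = 2 * π / 3 := by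
  rw [arccos_neg, ← cos_pi_div_three, arccos_cos (by positivity) (by linarith [pi_pos])]
  ring

theorem arccos_sqrt_two_div_two : arccos (√2 / 2) = π / 4 := by
  rw [← cos_pi_div_four, arccos_cos (by positivity) (by linarith [pi_pos])]

theorem arccos_inv_sqrt_three : arccos (√3)⁻¹ = arctan √2 := by
  rw [arctan_eq_arccos (sqrt_nonneg 2), sq_sqrt zero_le_two]
  norm_num

theorem arccos_sqrt_two_div_sqrt_three : arccos (√2 / √3) = π / 2 - arctan √2 := by
  rw [arctan_eq_arcsin, arccos_eq_pi_div_two_sub_arcsin, sq_sqrt zero_le_two]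
  norm_num

end Real

theorem EuclideanSpace.inner_vec3 (x₀ x₁ x₂ y₀ y₁ y₂ : ℝ) :
    ⟪!₂[x₀, x₁, x₂], !₂[y₀, y₁, y₂]⟫ = x₀ * y₀ + x₁ * y₁ + x₂ * y₂ := by
  simp [PiLp.inner_apply, Fin.sum_univ_three, mul_comm]

section InnerProductSpace

variable {V : Type*} [NormedAddCommGroup V] [InnerProductSpace ℝ V]

namespace InnerProductGeometry

theorem angle_eq_arccos_inner {x y : V} (hx : ‖x‖ = 1) (hy : ‖y‖ = 1) :
    angle x y = arccos ⟪x, y⟫ := by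
  rw [angle, hx, hy, mul_one, div_one]

theorem inner_sub_inner_smul_sub_inner_smul_s14 {A : V} (hA : ‖A‖ = 1) (B C : V) :
    ⟪B - ⟪B, A⟫ • A, C - ⟪C, A⟫ • A⟫ = ⟪B, C⟫ - ⟪B, A⟫ * ⟪C, A⟫ := by
  have hAA : ⟪A, A⟫ = 1 := by rw [real_inner_self_eq_norm_sq, hA, one_pow]
  simp only [inner_sub_left, inner_sub_right, real_inner_smul_left, real_inner_smul_right, hAA,
    real_inner_comm A]
  ring

theorem norm_sub_inner_smul {A : V} (hA : ‖A‖ = 1) (B : V) :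
    ‖B - ⟪B, A⟫ • A‖ = √(‖B‖ ^ 2 - ⟪B, A⟫ ^ 2) := by
  rw [norm_eq_sqrt_real_inner, inner_sub_inner_smul_sub_inner_smul_s14 hA, real_inner_self_eq_norm_sq,
    sq, sq]

theorem angle_sub_inner_smul {A : V} (hA : ‖A‖ = 1) (B C : V) :
    angle (B - ⟪B, A⟫ • A) (C - ⟪C, A⟫ • A) =
      arccos ((⟪B, C⟫ - ⟪B, A⟫ * ⟪C, A⟫) /
        (√(‖B‖ ^ 2 - ⟪B, A⟫ ^ 2) * √(‖C‖ ^ 2 - ⟪C, A⟫ ^ 2))) := by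
  rw [angle, inner_sub_inner_smul_sub_inner_smul_s14 hA, norm_sub_inner_smul hA,
    norm_sub_inner_smul hA]

end InnerProductGeometry

theorem sporadic_triangle_angles_of_inner {A B C : V} (hA : ‖A‖ = 1) (hB : ‖B‖ = 1)
    (hC : ‖C‖ = 1) (hAB : ⟪A, B⟫ = √2 / 2) (hAC : ⟪A, C⟫ = 0) (hBC : ⟪B, C⟫ = -(1 / 2)) :
    angle B C = 2 * π / 3 ∧ angle A C = π / 2 ∧ angle A B = π / 4 ∧
    angle (B - ⟪B, A⟫ • A) (C - ⟪C, A⟫ • A) = 3 * π / 4 ∧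
    angle (A - ⟪A, B⟫ • B) (C - ⟪C, B⟫ • B) = arctan √2 ∧
    angle (A - ⟪A, C⟫ • C) (B - ⟪B, C⟫ • C) = π / 2 - arctan √2 := by
  have hBA : ⟪B, A⟫ = √2 / 2 := by rw [real_inner_comm, hAB]
  have hCA : ⟪C, A⟫ = 0 := by rw [real_inner_comm, hAC]
  have hCB : ⟪C, B⟫ = -(1 / 2) := by rw [real_inner_comm, hBC]
  have h2 : √2 ^ 2 = 2 := sq_sqrt zero_le_two
  have h3 : √3 ^ 2 = 3 := sq_sqrt zero_le_three
  have sin_AB : √(1 ^ 2 - (√2 / 2) ^ 2) = √2 / 2 := by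
    rw [show (1 : ℝ) ^ 2 - (√2 / 2) ^ 2 = (√2 / 2) ^ 2 by linear_combination (-1 / 2) * h2,
      sqrt_sq (by positivity)]
  have sin_BC : √(1 ^ 2 - (-(1 / 2)) ^ 2) = √3 / 2 := by
    rw [show (1 : ℝ) ^ 2 - (-(1 / 2)) ^ 2 = (√3 / 2) ^ 2 by linear_combination (-1 / 4) * h3,
      sqrt_sq (by positivity)]
  refine ⟨?_, ?_, ?_, ?_, ?_, ?_⟩
  · rw [angle_eq_arccos_inner hB hC, hBC, arccos_neg_one_half]
  · rw [angle_eq_arccos_inner hA hC, hAC, arccos_zero]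
  · rw [angle_eq_arccos_inner hA hB, hAB, arccos_sqrt_two_div_two]
  · rw [angle_sub_inner_smul hA, hB, hC, hBA, hCA, hBC, sin_AB,
      show (-(1 / 2) - √2 / 2 * 0) / (√2 / 2 * √(1 ^ 2 - 0 ^ 2)) = -(√2 / 2) by
        field_simp; norm_num [h2],
      arccos_neg, arccos_sqrt_two_div_two]
    ring
  · rw [angle_sub_inner_smul hB, hA, hC, hAB, hCB, hAC, sin_AB, sin_BC,
      show (0 - √2 / 2 * -(1 / 2)) / (√2 / 2 * (√3 / 2)) = (√3)⁻¹ by field_simp; ring,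
      arccos_inv_sqrt_three]
  · rw [angle_sub_inner_smul hC, hA, hB, hAC, hBC, hAB, sin_BC,
      show (√2 / 2 - 0 * -(1 / 2)) / (√(1 ^ 2 - 0 ^ 2) * (√3 / 2)) = √2 / √3 by
        field_simp; norm_num,
      arccos_sqrt_two_div_sqrt_three]

end InnerProductSpace

/-- Exact geometric data of the sporadic triangle monotile: angles
`(3π/4, arctan √2, π/2 − arctan √2)` and sides `(2π/3, π/2, π/4)`. -/
theorem sporadic_triangle_data :
    let A : EuclideanSpace ℝ (Fin 3) := !₂[0, 0, 1]
    let B : EuclideanSpace ℝ (Fin 3) := !₂[Real.sqrt 2 / 2, 0, Real.sqrt 2 / 2]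
    let C : EuclideanSpace ℝ (Fin 3) := !₂[-(Real.sqrt 2 / 2), Real.sqrt 2 / 2, 0]
    ‖A‖ = 1 ∧ ‖B‖ = 1 ∧ ‖C‖ = 1 ∧
    InnerProductGeometry.angle B C = 2 * Real.pi / 3 ∧
    InnerProductGeometry.angle A C = Real.pi / 2 ∧
    InnerProductGeometry.angle A B = Real.pi / 4 ∧
    cornerAngle A B C = 3 * Real.pi / 4 ∧
    cornerAngle B A C = Real.arctan (Real.sqrt 2) ∧
    cornerAngle C A B = Real.pi / 2 - Real.arctan (Real.sqrt 2) := by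
  intro A B C
  have h2 : √2 ^ 2 = 2 := sq_sqrt zero_le_two
  have hAA : ⟪A, A⟫ = 1 := by simp only [A, EuclideanSpace.inner_vec3]; norm_num
  have hBB : ⟪B, B⟫ = 1 := by
    simp only [B, EuclideanSpace.inner_vec3]; linear_combination h2 / 2
  have hCC : ⟪C, C⟫ = 1 := by
    simp only [C, EuclideanSpace.inner_vec3]; linear_combination h2 / 2
  have hAB : ⟪A, B⟫ = √2 / 2 := by simp only [A, B, EuclideanSpace.inner_vec3]; ring
  have hAC : ⟪A, C⟫ = 0 := by simp only [A, C, EuclideanSpace.inner_vec3]; ring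
  have hBC : ⟪B, C⟫ = -(1 / 2) := by
    simp only [B, C, EuclideanSpace.inner_vec3]; linear_combination -h2 / 4
  have hA : ‖A‖ = 1 := by rw [norm_eq_sqrt_real_inner, hAA, sqrt_one]
  have hB : ‖B‖ = 1 := by rw [norm_eq_sqrt_real_inner, hBB, sqrt_one]
  have hC : ‖C‖ = 1 := by rw [norm_eq_sqrt_real_inner, hCC, sqrt_one]
  exact ⟨hA, hB, hC, sporadic_triangle_angles_of_inner hA hB hC hAB hAC hBC⟩
end

section
/- For every integer k ≥ 3 and every real α with π/2 < α < π − π/k, there exist a spherical triangle Δ (given by linearly independent unit vectors in ℝ³) whose corner angles are α, π − α, and 2π/k, and a family T₁, …, T_{2k} of subsets of the unit sphere S² in ℝ³ such that each Tᵢ is the image of Δ under a linear isometry of ℝ³, the union of the Tᵢ is S², and the interiors of the Tᵢ in the subspace topology of S² are pairwise disjoint. -/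
open scoped RealInnerProductSpace

/-- The spherical triangle with vertices `A`, `B`, `C`: the intersection of the unit
sphere with the cone `{sA + tB + uC : s, t, u ≥ 0}`. -/
def sphericalTriangle (A B C : EuclideanSpace ℝ (Fin 3)) : Set (EuclideanSpace ℝ (Fin 3)) :=
  Metric.sphere 0 1 ∩
    {x | ∃ s t u : ℝ, 0 ≤ s ∧ 0 ≤ t ∧ 0 ≤ u ∧ x = s • A + t • B + u • C}

/-!
Put `C` at the north pole, `A = (s, 0, c)` on the meridian of longitude `0` and
`B = (s cos β, s sin β, -c)` on the meridian of longitude `β = 2π/k`. The half-turn about the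
horizontal axis at longitude `β / 2` swaps `A` and `B` and sends `C` to `-C`. Hence the angle at
`B` is the supplement of the angle at `A`, and the lune between the two meridians is the union of
the triangle `ABC` and its image under the half-turn, the two halves lying on either side of the
great circle `AB`. The `k` rotations of this lune about the polar axis cover the sphere, which
gives `2k` tiles. The height `c` is chosen so that the spherical law of cosines yields the angle
`α` at `A`; it is below `1` exactly when `α < π - π/k`.

An interior point of a tile lies strictly inside the three half-spaces that bound it. The two
meridian half-spaces determine its lune by its longitude, and the third one the side of the
great circle `AB`, so distinct tiles have disjoint interiors.
-/

open Real InnerProductGeometry Filter Topology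

section InnerProductSpace

variable {E : Type*} [NormedAddCommGroup E] [InnerProductSpace ℝ E]

def halfSpace (n : E) : Set E := {x | 0 ≤ ⟪n, x⟫}

theorem LinearIsometryEquiv.image_halfSpace (g : E ≃ₗᵢ[ℝ] E) (n : E) :
    g '' halfSpace n = halfSpace (g n) := by
  ext x
  simp [g.image_eq_preimage_symm, halfSpace, g.inner_map_eq_flip]

theorem LinearIsometryEquiv.image_inter_halfSpace (g : E ≃ₗᵢ[ℝ] E) (S : Set E) (n : E) :
    g '' (S ∩ halfSpace n) = g '' S ∩ halfSpace (g n) := by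
  rw [Set.image_inter g.injective, g.image_halfSpace]

theorem inner_pos_of_mem_interior_sphere {S : Set (Metric.sphere (0 : E) 1)} {n : E}
    (hn : n ≠ 0) (hS : ∀ y ∈ S, 0 ≤ ⟪n, (y : E)⟫) {x : Metric.sphere (0 : E) 1}
    (hx : x ∈ interior S) : 0 < ⟪n, (x : E)⟫ := by
  have hx1 : ‖(x : E)‖ = 1 := norm_eq_of_mem_sphere x
  refine (hS x (interior_subset hx)).lt_of_ne' fun h0 => ?_
  -- `x - t • n` is never `0` since its inner product with `x` is `1`
  have hne : ∀ t : ℝ, (x : E) - t • n ≠ 0 := fun t h => by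
    have := congrArg (⟪·, (x : E)⟫) h
    simp [inner_sub_left, inner_smul_left, h0, hx1] at this
  let p : ℝ → Metric.sphere (0 : E) 1 := fun t =>
    ⟨‖(x : E) - t • n‖⁻¹ • ((x : E) - t • n), by simp [norm_smul, hne t]⟩
  have hp : Continuous p := by
    refine Continuous.subtype_mk ?_ _
    exact ((continuous_const.sub (continuous_id.smul continuous_const)).norm.inv₀
      fun t => norm_ne_zero_iff.mpr (hne t)).smul (continuous_const.sub
      (continuous_id.smul continuous_const))
  have hp0 : p 0 = x := Subtype.ext (by simp [p, hx1])
  have hnear : ∀ᶠ t in 𝓝[>] (0 : ℝ), p t ∈ interior S ∧ 0 < t :=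
    ((hp.tendsto 0).eventually (isOpen_interior.mem_nhds (hp0 ▸ hx))).filter_mono
      nhdsWithin_le_nhds |>.and self_mem_nhdsWithin
  obtain ⟨t, hpt, ht⟩ := hnear.exists
  have hlt : ⟪n, (p t : E)⟫ < 0 := by
    simp only [p, inner_smul_right, inner_sub_right, h0, real_inner_self_eq_norm_sq, zero_sub]
    have : 0 < ‖n‖ := norm_pos_iff.mpr hn
    exact mul_neg_of_pos_of_neg (inv_pos.mpr (norm_pos_iff.mpr (hne t))) (by simp; positivity)
  exact hlt.not_ge (hS _ (interior_subset hpt))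

theorem inner_sub_inner_smul_self {A : E} (hA : ‖A‖ = 1) (B C : E) :
    ⟪B - ⟪B, A⟫ • A, C - ⟪C, A⟫ • A⟫ = ⟪B, C⟫ - ⟪B, A⟫ * ⟪C, A⟫ := by
  simp only [inner_sub_left, inner_sub_right, real_inner_smul_left, real_inner_smul_right,
    real_inner_self_eq_norm_sq, hA, real_inner_comm A]
  ring

theorem angle_eq_of_inner_eq {u w : E} (hu : u ≠ 0) (hw : w ≠ 0) {θ : ℝ} (hθ₀ : 0 ≤ θ)
    (hθπ : θ ≤ π) (h : ⟪u, w⟫ = ‖u‖ * ‖w‖ * cos θ) : angle u w = θ := by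
  rw [angle, h, mul_div_cancel_left₀ _ (by positivity), arccos_cos hθ₀ hθπ]

section DualFamily

variable {ι : Type*} [Fintype ι] {v n : ι → E} {d : ℝ}

theorem inner_sum_smul_of_dual (hdiag : ∀ i, ⟪n i, v i⟫ = d)
    (hoff : Pairwise fun i j => ⟪n i, v j⟫ = 0) (t : ι → ℝ) (i : ι) :
    ⟪n i, ∑ j, t j • v j⟫ = d * t i := by
  rw [inner_sum, Finset.sum_eq_single i (fun j _ hji => by
    rw [real_inner_smul_right, hoff hji.symm, mul_zero]) (by simp)]
  rw [real_inner_smul_right, hdiag, mul_comm]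

theorem linearIndependent_of_dual (hd : d ≠ 0) (hdiag : ∀ i, ⟪n i, v i⟫ = d)
    (hoff : Pairwise fun i j => ⟪n i, v j⟫ = 0) : LinearIndependent ℝ v := by
  refine Fintype.linearIndependent_iff.mpr fun t ht i => ?_
  have h := inner_sum_smul_of_dual hdiag hoff t i
  rw [ht, inner_zero_right] at h
  exact (mul_eq_zero.mp h.symm).resolve_left hd

theorem setOf_nonneg_combination_eq_of_dual [FiniteDimensional ℝ E]
    (hcard : Fintype.card ι = Module.finrank ℝ E) (hd : 0 < d) (hdiag : ∀ i, ⟪n i, v i⟫ = d)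
    (hoff : Pairwise fun i j => ⟪n i, v j⟫ = 0) :
    {x | ∃ t : ι → ℝ, (∀ i, 0 ≤ t i) ∧ x = ∑ i, t i • v i} = {x | ∀ i, 0 ≤ ⟪n i, x⟫} := by
  ext x
  constructor
  · rintro ⟨t, ht, rfl⟩ i
    rw [inner_sum_smul_of_dual hdiag hoff]
    exact mul_nonneg hd.le (ht i)
  · intro hx
    have hspan := (linearIndependent_of_dual hd.ne' hdiag hoff).span_eq_top_of_card_eq_finrank'
      hcard
    obtain ⟨t, rfl⟩ := (Submodule.mem_span_range_iff_exists_fun ℝ).mp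
      (hspan ▸ Submodule.mem_top : x ∈ Submodule.span ℝ (Set.range v))
    refine ⟨t, fun i => ?_, rfl⟩
    have hi := hx i
    rw [inner_sum_smul_of_dual hdiag hoff] at hi
    exact (mul_nonneg_iff_of_pos_left hd).mp hi

end DualFamily

end InnerProductSpace

theorem exists_polar_Ico (x y : ℝ) :
    ∃ ρ θ, 0 ≤ ρ ∧ 0 ≤ θ ∧ θ < 2 * π ∧ x = ρ * cos θ ∧ y = ρ * sin θ := by
  set z : ℂ := ⟨x, y⟩
  obtain ⟨hθ₀, hθ⟩ := toIcoMod_mem_Ico two_pi_pos 0 z.arg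
  refine ⟨‖z‖, toIcoMod two_pi_pos 0 z.arg, norm_nonneg z, hθ₀, by simpa using hθ, ?_, ?_⟩
  · rw [← self_sub_toIcoDiv_zsmul, zsmul_eq_mul, cos_sub_int_mul_two_pi, Complex.norm_mul_cos_arg]
  · rw [← self_sub_toIcoDiv_zsmul, zsmul_eq_mul, sin_sub_int_mul_two_pi, Complex.norm_mul_sin_arg]

theorem pos_of_sin_pos_of_sin_pos {u v : ℝ} (hu : 0 < sin u) (hv : 0 < sin v)
    (hv' : v ≤ 2 * π) (huv : 0 ≤ u + v) : 0 < u := by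
  by_contra! h
  have hπ : u < -π := by
    by_contra! h'
    exact hu.not_ge (sin_nonpos_of_nonpos_of_neg_pi_le h h')
  have : sin v ≤ 0 := by
    rw [← sin_sub_two_pi]
    exact sin_nonpos_of_nonpos_of_neg_pi_le (by linarith) (by linarith)
  linarith

local notation "ℝ³" => EuclideanSpace ℝ (Fin 3)

section SphericalTriangle

theorem cornerAngle_map (g : ℝ³ ≃ₗᵢ[ℝ] ℝ³) (A B C : ℝ³) :
    cornerAngle (g A) (g B) (g C) = cornerAngle A B C := by
  simp only [cornerAngle, g.inner_map_map, ← map_smul, ← map_sub]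
  exact g.toLinearIsometry.angle_map _ _

theorem cornerAngle_neg_right (A B C : ℝ³) : cornerAngle A B (-C) = π - cornerAngle A B C := by
  rw [cornerAngle, cornerAngle, ← angle_neg_right, inner_neg_left, neg_smul, neg_sub_neg,
    neg_sub]

theorem cornerAngle_eq_pi_sub_of_swap (g : ℝ³ ≃ₗᵢ[ℝ] ℝ³) {A B C : ℝ³} (hA : g A = B)
    (hB : g B = A) (hC : g C = -C) : cornerAngle B A C = π - cornerAngle A B C := by
  rw [← cornerAngle_neg_right, ← cornerAngle_map g A B (-C), hA, hB, map_neg, hC, neg_neg]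

/-- The spherical law of cosines, squared so that no square roots appear. -/
theorem cornerAngle_eq_of_sq {A B C : ℝ³} (hA : ‖A‖ = 1) (hB : ‖B‖ = 1) (hC : ‖C‖ = 1)
    (hAB : ⟪B, A⟫ ^ 2 < 1) (hAC : ⟪C, A⟫ ^ 2 < 1) {θ : ℝ} (hθ₀ : 0 ≤ θ) (hθπ : θ ≤ π)
    (hsign : 0 ≤ (⟪B, C⟫ - ⟪B, A⟫ * ⟪C, A⟫) * cos θ)
    (hsq : (⟪B, C⟫ - ⟪B, A⟫ * ⟪C, A⟫) ^ 2 = (1 - ⟪B, A⟫ ^ 2) * (1 - ⟪C, A⟫ ^ 2) * cos θ ^ 2) :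
    cornerAngle A B C = θ := by
  have norm_sq (X : ℝ³) (hX : ‖X‖ = 1) : ‖X - ⟪X, A⟫ • A‖ ^ 2 = 1 - ⟪X, A⟫ ^ 2 := by
    rw [← real_inner_self_eq_norm_sq, inner_sub_inner_smul_self hA, real_inner_self_eq_norm_sq,
      hX]
    ring
  set u := B - ⟪B, A⟫ • A
  set w := C - ⟪C, A⟫ • A
  have hu : 0 < ‖u‖ := by nlinarith [norm_sq B hB, norm_nonneg u]
  have hw : 0 < ‖w‖ := by nlinarith [norm_sq C hC, norm_nonneg w]
  have huw : ⟪u, w⟫ = ⟪B, C⟫ - ⟪B, A⟫ * ⟪C, A⟫ := inner_sub_inner_smul_self hA B C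
  refine angle_eq_of_inner_eq (norm_pos_iff.mp hu) (norm_pos_iff.mp hw) hθ₀ hθπ ?_
  have hsq' : ⟪u, w⟫ ^ 2 = (‖u‖ * ‖w‖ * cos θ) ^ 2 := by
    rw [huw, hsq, mul_pow, mul_pow, norm_sq B hB, norm_sq C hC]
  rcases sq_eq_sq_iff_eq_or_eq_neg.mp hsq' with h | h
  · exact h
  · rw [← huw, h] at hsign
    have hN : ‖u‖ * ‖w‖ * cos θ ^ 2 ≤ ‖u‖ * ‖w‖ * 0 := by linarith
    have hcos : cos θ = 0 :=
      pow_eq_zero_iff two_ne_zero |>.mp <| le_antisymm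
        (le_of_mul_le_mul_left hN (mul_pos hu hw)) (sq_nonneg _)
    rw [h, hcos]
    ring

theorem sphericalTriangle_eq_of_dual {A B C : ℝ³} {n : Fin 3 → ℝ³} {d : ℝ} (hd : 0 < d)
    (hdiag : ∀ i, ⟪n i, ![A, B, C] i⟫ = d)
    (hoff : Pairwise fun i j => ⟪n i, ![A, B, C] j⟫ = 0) :
    sphericalTriangle A B C =
      Metric.sphere 0 1 ∩ halfSpace (n 0) ∩ halfSpace (n 1) ∩ halfSpace (n 2) := by
  have hcone := setOf_nonneg_combination_eq_of_dual (by simp) hd hdiag hoff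
  simp only [sphericalTriangle, Set.inter_assoc]
  congr 1
  ext x
  constructor
  · rintro ⟨a, b, c, ha, hb, hc, rfl⟩
    have hx : a • A + b • B + c • C ∈ {x | ∀ i, 0 ≤ ⟪n i, x⟫} := hcone ▸
      ⟨![a, b, c], fun i => by fin_cases i <;> assumption, by simp [Fin.sum_univ_three]⟩
    exact ⟨hx 0, hx 1, hx 2⟩
  · rintro ⟨h0, h1, h2⟩
    obtain ⟨t, ht, rfl⟩ :
        x ∈ {x | ∃ t : Fin 3 → ℝ, (∀ i, 0 ≤ t i) ∧ x = ∑ i, t i • ![A, B, C] i} :=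
      hcone ▸ fun i => by fin_cases i <;> assumption
    exact ⟨t 0, t 1, t 2, ht 0, ht 1, ht 2, by simp [Fin.sum_univ_three]⟩

end SphericalTriangle

namespace EarthMapTiling

theorem inner_toLp_three (a b c : ℝ) (x : ℝ³) :
    ⟪!₂[a, b, c], x⟫ = a * x 0 + b * x 1 + c * x 2 := by
  simp [PiLp.inner_apply, Fin.sum_univ_three]
  ring

theorem norm_eq_sqrt_three (x : ℝ³) : ‖x‖ = √(x 0 ^ 2 + x 1 ^ 2 + x 2 ^ 2) := by
  simp [EuclideanSpace.norm_eq, Fin.sum_univ_three]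

noncomputable section

def rotZ (γ : ℝ) : ℝ³ ≃ₗᵢ[ℝ] ℝ³ where
  toFun x := !₂[cos γ * x 0 - sin γ * x 1, sin γ * x 0 + cos γ * x 1, x 2]
  invFun x := !₂[cos γ * x 0 + sin γ * x 1, cos γ * x 1 - sin γ * x 0, x 2]
  map_add' x y := by ext i; fin_cases i <;> simp <;> ring
  map_smul' t x := by ext i; fin_cases i <;> simp <;> ring
  left_inv x := by
    ext i; fin_cases i <;> simp
    · linear_combination x 0 * sin_sq_add_cos_sq γ
    · linear_combination x 1 * sin_sq_add_cos_sq γ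
  right_inv x := by
    ext i; fin_cases i <;> simp
    · linear_combination x 0 * sin_sq_add_cos_sq γ
    · linear_combination x 1 * sin_sq_add_cos_sq γ
  norm_map' x := by
    simp only [LinearEquiv.coe_mk, LinearMap.coe_mk, AddHom.coe_mk, norm_eq_sqrt_three]
    simp only [Matrix.cons_val_zero, Matrix.cons_val_one, Matrix.cons_val_two,
      Matrix.head_cons, Matrix.tail_cons]
    congr 1
    linear_combination (x 0 ^ 2 + x 1 ^ 2) * sin_sq_add_cos_sq γ

theorem rotZ_apply (γ : ℝ) (x : ℝ³) :
    rotZ γ x = !₂[cos γ * x 0 - sin γ * x 1, sin γ * x 0 + cos γ * x 1, x 2] := rfl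

/-- The half-turn about the horizontal axis at longitude `β / 2`. -/
def halfTurn (β : ℝ) : ℝ³ ≃ₗᵢ[ℝ] ℝ³ where
  toFun x := !₂[cos β * x 0 + sin β * x 1, sin β * x 0 - cos β * x 1, -x 2]
  invFun x := !₂[cos β * x 0 + sin β * x 1, sin β * x 0 - cos β * x 1, -x 2]
  map_add' x y := by ext i; fin_cases i <;> simp <;> ring
  map_smul' t x := by ext i; fin_cases i <;> simp <;> ring
  left_inv x := by
    ext i; fin_cases i <;> simp
    · linear_combination x 0 * sin_sq_add_cos_sq β
    · linear_combination x 1 * sin_sq_add_cos_sq β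
  right_inv x := by
    ext i; fin_cases i <;> simp
    · linear_combination x 0 * sin_sq_add_cos_sq β
    · linear_combination x 1 * sin_sq_add_cos_sq β
  norm_map' x := by
    simp only [LinearEquiv.coe_mk, LinearMap.coe_mk, AddHom.coe_mk, norm_eq_sqrt_three]
    simp only [Matrix.cons_val_zero, Matrix.cons_val_one, Matrix.cons_val_two,
      Matrix.head_cons, Matrix.tail_cons]
    congr 1
    linear_combination (x 0 ^ 2 + x 1 ^ 2) * sin_sq_add_cos_sq β

theorem halfTurn_apply (β : ℝ) (x : ℝ³) :
    halfTurn β x = !₂[cos β * x 0 + sin β * x 1, sin β * x 0 - cos β * x 1, -x 2] := rfl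

def meridianNormal (φ : ℝ) : ℝ³ := !₂[-sin φ, cos φ, 0]

def vertexA (s c : ℝ) : ℝ³ := !₂[s, 0, c]

def vertexB (s c β : ℝ) : ℝ³ := !₂[s * cos β, s * sin β, -c]

def pole : ℝ³ := !₂[0, 0, 1]

/-- The normal of the plane through `0`, `vertexA s c` and `vertexB s c β`, on the side of
`pole`. -/
def chordNormal (s c β : ℝ) : ℝ³ := !₂[-(c * sin β), c * (1 + cos β), s * sin β]

theorem inner_meridianNormal (φ : ℝ) (x : ℝ³) :
    ⟪meridianNormal φ, x⟫ = cos φ * x 1 - sin φ * x 0 := by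
  rw [meridianNormal, inner_toLp_three]
  ring

theorem inner_chordNormal (s c β : ℝ) (x : ℝ³) :
    ⟪chordNormal s c β, x⟫ = -(c * sin β) * x 0 + c * (1 + cos β) * x 1 + s * sin β * x 2 := by
  rw [chordNormal, inner_toLp_three]

theorem meridianNormal_ne_zero (φ : ℝ) : meridianNormal φ ≠ 0 := by
  intro h
  have h₀ := congrArg (· 0) h
  have h₁ := congrArg (· 1) h
  simp [meridianNormal] at h₀ h₁
  nlinarith [sin_sq_add_cos_sq φ]

theorem chordNormal_ne_zero {s c β : ℝ} (hs : 0 < s) (hβ : 0 < sin β) :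
    chordNormal s c β ≠ 0 := by
  intro h
  have h₂ := congrArg (· 2) h
  simp [chordNormal] at h₂
  exact h₂.elim hs.ne' hβ.ne'

theorem rotZ_meridianNormal (γ φ : ℝ) : rotZ γ (meridianNormal φ) = meridianNormal (γ + φ) := by
  ext i; fin_cases i <;> simp [rotZ_apply, meridianNormal, sin_add, cos_add] <;> ring

theorem halfTurn_meridianNormal_zero (β : ℝ) :
    halfTurn β (meridianNormal 0) = -meridianNormal β := by
  ext i; fin_cases i <;> simp [halfTurn_apply, meridianNormal]

theorem halfTurn_meridianNormal (β : ℝ) : halfTurn β (meridianNormal β) = -meridianNormal 0 := by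
  ext i; fin_cases i <;> simp [halfTurn_apply, meridianNormal]
  · ring
  · linear_combination -sin_sq_add_cos_sq β

theorem halfTurn_chordNormal (s c β : ℝ) :
    halfTurn β (chordNormal s c β) = -chordNormal s c β := by
  ext i; fin_cases i <;> simp [halfTurn_apply, chordNormal]
  · ring
  · linear_combination (-c) * sin_sq_add_cos_sq β

theorem halfTurn_vertexA (s c β : ℝ) : halfTurn β (vertexA s c) = vertexB s c β := by
  ext i; fin_cases i <;> simp [halfTurn_apply, vertexA, vertexB] <;> ring

theorem halfTurn_vertexB (s c β : ℝ) : halfTurn β (vertexB s c β) = vertexA s c := by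
  ext i; fin_cases i <;> simp [halfTurn_apply, vertexA, vertexB]
  · linear_combination s * sin_sq_add_cos_sq β
  · ring

theorem halfTurn_pole (β : ℝ) : halfTurn β pole = -pole := by
  ext i; fin_cases i <;> simp [halfTurn_apply, pole]

section Triangle

/-- Up to the factor `s * sin β`, the basis dual to `vertexA s c, vertexB s c β, pole`. -/
def triangleDual (s c β : ℝ) : Fin 3 → ℝ³ :=
  ![-meridianNormal β, meridianNormal 0, chordNormal s c β]

theorem inner_triangleDual_self (s c β : ℝ) (i : Fin 3) :
    ⟪triangleDual s c β i, ![vertexA s c, vertexB s c β, pole] i⟫ = s * sin β := by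
  fin_cases i <;>
    simp [triangleDual, inner_meridianNormal, inner_chordNormal, vertexA, vertexB, pole]
  all_goals ring

theorem inner_triangleDual_of_ne (s c β : ℝ) :
    Pairwise fun i j => ⟪triangleDual s c β i, ![vertexA s c, vertexB s c β, pole] j⟫ = 0 := by
  intro i j hij
  fin_cases i <;> fin_cases j <;> first | exact absurd rfl hij |
    simp [triangleDual, inner_meridianNormal, inner_chordNormal, vertexA, vertexB, pole] <;> ring

variable {s c β : ℝ}

theorem linearIndependent_vertices (hs : 0 < s) (hβ : 0 < sin β) :
    LinearIndependent ℝ ![vertexA s c, vertexB s c β, pole] :=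
  linearIndependent_of_dual (mul_pos hs hβ).ne' (inner_triangleDual_self s c β)
    (inner_triangleDual_of_ne s c β)

theorem sphericalTriangle_eq_inter_halfSpace (hs : 0 < s) (hβ : 0 < sin β) :
    sphericalTriangle (vertexA s c) (vertexB s c β) pole = Metric.sphere 0 1 ∩
      halfSpace (-meridianNormal β) ∩ halfSpace (meridianNormal 0) ∩
      halfSpace (chordNormal s c β) :=
  sphericalTriangle_eq_of_dual (n := triangleDual s c β) (mul_pos hs hβ)
    (inner_triangleDual_self s c β) (inner_triangleDual_of_ne s c β)

/-- The isometry carrying the triangle onto the tile in the `q`-th lune, on the side of the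
pole (`e = 0`) or the opposite side (`e = 1`) of the great circle through the vertices. -/
def tileIso (β : ℝ) (e : Fin 2) (q : ℕ) : ℝ³ ≃ₗᵢ[ℝ] ℝ³ :=
  if e = 0 then rotZ (q * β) else (halfTurn β).trans (rotZ (q * β))

theorem image_tileIso (hs : 0 < s) (hβ : 0 < sin β) (e : Fin 2) (q : ℕ) :
    tileIso β e q '' sphericalTriangle (vertexA s c) (vertexB s c β) pole =
      Metric.sphere 0 1 ∩ halfSpace (-meridianNormal (q * β + β)) ∩
        halfSpace (meridianNormal (q * β)) ∩
        halfSpace ((-1 : ℝ) ^ (e : ℕ) • rotZ (q * β) (chordNormal s c β)) := by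
  rw [sphericalTriangle_eq_inter_halfSpace hs hβ]
  fin_cases e
  · simp [tileIso, LinearIsometryEquiv.image_inter_halfSpace, LinearIsometryEquiv.image_sphere,
      rotZ_meridianNormal]
  · simp [tileIso, LinearIsometryEquiv.coe_trans, Set.image_comp,
      LinearIsometryEquiv.image_inter_halfSpace, LinearIsometryEquiv.image_sphere,
      rotZ_meridianNormal, halfTurn_meridianNormal, halfTurn_meridianNormal_zero,
      halfTurn_chordNormal]
    ext x
    simp only [Set.mem_inter_iff]
    tauto

end Triangle

section Lunes

theorem inner_meridianNormal_of_polar {x : ℝ³} {ρ θ : ℝ} (hx₀ : x 0 = ρ * cos θ)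
    (hx₁ : x 1 = ρ * sin θ) (φ : ℝ) : ⟪meridianNormal φ, x⟫ = ρ * sin (θ - φ) := by
  rw [inner_meridianNormal, hx₀, hx₁, sin_sub]
  ring

variable {k : ℕ} {β : ℝ}

theorem exists_mem_lune (hβ : 0 < β) (hβπ : β ≤ π) (hk : k * β = 2 * π) (x : ℝ³) :
    ∃ q < k, 0 ≤ ⟪-meridianNormal (q * β + β), x⟫ ∧ 0 ≤ ⟪meridianNormal (q * β), x⟫ := by
  obtain ⟨ρ, θ, hρ, hθ₀, hθ, hx₀, hx₁⟩ := exists_polar_Ico (x 0) (x 1)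
  have hθβ : 0 ≤ θ / β := div_nonneg hθ₀ hβ.le
  have hlow : ⌊θ / β⌋₊ * β ≤ θ := (le_div_iff₀ hβ).mp (Nat.floor_le hθβ)
  have hhigh : θ < ⌊θ / β⌋₊ * β + β := by
    have := (div_lt_iff₀ hβ).mp (Nat.lt_floor_add_one (θ / β))
    linarith
  refine ⟨⌊θ / β⌋₊, (Nat.floor_lt hθβ).mpr ((div_lt_iff₀ hβ).mpr (by linarith)), ?_, ?_⟩
  · rw [inner_neg_left, inner_meridianNormal_of_polar hx₀ hx₁, ← mul_neg, ← sin_neg, neg_sub]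
    exact mul_nonneg hρ (sin_nonneg_of_nonneg_of_le_pi (by linarith) (by linarith))
  · rw [inner_meridianNormal_of_polar hx₀ hx₁]
    exact mul_nonneg hρ (sin_nonneg_of_nonneg_of_le_pi (by linarith) (by linarith))

theorem eq_of_mem_open_lune (hβ : 0 < β) (hk : k * β = 2 * π) {x : ℝ³} {q q' : ℕ}
    (hq : q < k) (hq' : q' < k)
    (h : 0 < ⟪-meridianNormal (q * β + β), x⟫ ∧ 0 < ⟪meridianNormal (q * β), x⟫)
    (h' : 0 < ⟪-meridianNormal (q' * β + β), x⟫ ∧ 0 < ⟪meridianNormal (q' * β), x⟫) :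
    q = q' := by
  obtain ⟨ρ, θ, hρ, hθ₀, hθ, hx₀, hx₁⟩ := exists_polar_Ico (x 0) (x 1)
  suffices key : ∀ q < k, 0 < ⟪-meridianNormal (q * β + β), x⟫ ∧
      0 < ⟪meridianNormal (q * β), x⟫ → ⌊θ / β⌋₊ = q from
    (key q hq h).symm.trans (key q' hq' h')
  rintro q hq ⟨hright, hleft⟩
  rw [inner_neg_left, inner_meridianNormal_of_polar hx₀ hx₁, ← mul_neg, ← sin_neg,
    neg_sub] at hright
  rw [inner_meridianNormal_of_polar hx₀ hx₁] at hleft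
  have hqk : (q : ℝ) * β + β ≤ 2 * π := by
    rw [← hk, ← add_one_mul]
    exact mul_le_mul_of_nonneg_right (by exact_mod_cast hq) hβ.le
  have hq₀ : 0 ≤ (q : ℝ) * β := by positivity
  have hu := pos_of_mul_pos_right hleft hρ
  have hv := pos_of_mul_pos_right hright hρ
  have h₁ := pos_of_sin_pos_of_sin_pos hu hv (by linarith) (by linarith)
  have h₂ := pos_of_sin_pos_of_sin_pos hv hu (by linarith) (by linarith)
  rw [Nat.floor_eq_iff (div_nonneg hθ₀ hβ.le), le_div_iff₀ hβ, div_lt_iff₀ hβ]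
  constructor <;> linarith

end Lunes

section Tiling

variable {k : ℕ} {s c β : ℝ}

local notation "Δ" => sphericalTriangle (vertexA s c) (vertexB s c β) pole

theorem iUnion_image_tileIso (hs : 0 < s) (hβ₀ : 0 < β) (hβπ : β < π) (hk : k * β = 2 * π) :
    ⋃ p : Fin 2 × Fin k, tileIso β p.1 p.2 '' Δ = Metric.sphere 0 1 := by
  have hsinβ : 0 < sin β := sin_pos_of_pos_of_lt_pi hβ₀ hβπ
  refine subset_antisymm (Set.iUnion_subset fun p => ?_) fun x hx => ?_
  · rw [image_tileIso hs hsinβ]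
    exact fun x hx => hx.1.1.1
  obtain ⟨q, hq, hright, hleft⟩ := exists_mem_lune hβ₀ hβπ.le hk x
  obtain ⟨e, he⟩ :
      ∃ e : Fin 2, 0 ≤ ⟪(-1 : ℝ) ^ (e : ℕ) • rotZ (q * β) (chordNormal s c β), x⟫ := by
    rcases le_total 0 ⟪rotZ (q * β) (chordNormal s c β), x⟫ with h | h
    · exact ⟨0, by simpa using h⟩
    · exact ⟨1, by simpa [inner_neg_left] using h⟩
  refine Set.mem_iUnion.mpr ⟨(e, ⟨q, hq⟩), ?_⟩
  rw [image_tileIso hs hsinβ]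
  exact ⟨⟨⟨hx, hright⟩, hleft⟩, he⟩

theorem pos_of_mem_interior_image_tileIso (hs : 0 < s) (hsinβ : 0 < sin β) {e : Fin 2}
    {q : ℕ} {x : Metric.sphere (0 : ℝ³) 1}
    (hx : x ∈ interior ((↑) ⁻¹' (tileIso β e q '' Δ))) :
    (0 < ⟪-meridianNormal (q * β + β), (x : ℝ³)⟫ ∧ 0 < ⟪meridianNormal (q * β), (x : ℝ³)⟫) ∧
      0 < ⟪(-1 : ℝ) ^ (e : ℕ) • rotZ (q * β) (chordNormal s c β), (x : ℝ³)⟫ := by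
  rw [image_tileIso hs hsinβ] at hx
  refine ⟨⟨inner_pos_of_mem_interior_sphere (neg_ne_zero.mpr (meridianNormal_ne_zero _))
    (fun y hy => hy.1.1.2) hx, inner_pos_of_mem_interior_sphere (meridianNormal_ne_zero _)
    (fun y hy => hy.1.2) hx⟩, inner_pos_of_mem_interior_sphere ?_ (fun y hy => hy.2) hx⟩
  exact smul_ne_zero (pow_ne_zero _ (by norm_num))
    ((rotZ _).map_ne_zero_iff.mpr (chordNormal_ne_zero hs hsinβ))

theorem pairwise_disjoint_interior_image_tileIso (hs : 0 < s) (hβ₀ : 0 < β) (hβπ : β < π)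
    (hk : k * β = 2 * π) :
    Pairwise fun p p' : Fin 2 × Fin k =>
      Disjoint (interior ((↑) ⁻¹' (tileIso β p.1 p.2 '' Δ) : Set (Metric.sphere (0 : ℝ³) 1)))
        (interior ((↑) ⁻¹' (tileIso β p'.1 p'.2 '' Δ))) := by
  have hsinβ : 0 < sin β := sin_pos_of_pos_of_lt_pi hβ₀ hβπ
  rintro ⟨e, q⟩ ⟨e', q'⟩ hne
  refine Set.disjoint_left.mpr fun x hx hx' => hne ?_
  obtain ⟨hlune, hside⟩ := pos_of_mem_interior_image_tileIso hs hsinβ hx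
  obtain ⟨hlune', hside'⟩ := pos_of_mem_interior_image_tileIso hs hsinβ hx'
  obtain rfl : q = q' := Fin.ext (eq_of_mem_open_lune hβ₀ hk q.2 q'.2 hlune hlune')
  fin_cases e <;> fin_cases e' <;> simp [inner_neg_left] at hside hside' ⊢ <;> linarith

theorem exists_tiling (hs : 0 < s) (hβ₀ : 0 < β) (hβπ : β < π) (hk : k * β = 2 * π) :
    ∃ T : Fin (2 * k) → Set ℝ³,
      (∀ i, ∃ g : ℝ³ ≃ₗᵢ[ℝ] ℝ³, T i = g '' Δ) ∧ (⋃ i, T i) = Metric.sphere 0 1 ∧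
      Pairwise fun i j => Disjoint
        (interior ((↑) ⁻¹' T i : Set (Metric.sphere (0 : ℝ³) 1)))
        (interior ((↑) ⁻¹' T j : Set (Metric.sphere (0 : ℝ³) 1))) := by
  let p : Fin (2 * k) ≃ Fin 2 × Fin k := finProdFinEquiv.symm
  refine ⟨fun i => tileIso β (p i).1 (p i).2 '' Δ, fun i => ⟨_, rfl⟩, ?_,
    fun i j hij => pairwise_disjoint_interior_image_tileIso hs hβ₀ hβπ hk (p.injective.ne hij)⟩
  rw [p.surjective.iUnion_comp (fun p => tileIso β p.1 p.2 '' Δ)]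
  exact iUnion_image_tileIso hs hβ₀ hβπ hk

end Tiling

section Angles

variable {s c β : ℝ}

theorem norm_vertexA (hsc : s ^ 2 + c ^ 2 = 1) : ‖vertexA s c‖ = 1 := by
  simp [norm_eq_sqrt_three, vertexA, hsc]

theorem norm_vertexB (hsc : s ^ 2 + c ^ 2 = 1) : ‖vertexB s c β‖ = 1 := by
  rw [norm_eq_sqrt_three, sqrt_eq_one]
  simp [vertexB]
  linear_combination s ^ 2 * sin_sq_add_cos_sq β + hsc

theorem norm_pole : ‖pole‖ = 1 := by
  simp [norm_eq_sqrt_three, pole]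

theorem inner_vertexB_vertexA : ⟪vertexB s c β, vertexA s c⟫ = s ^ 2 * cos β - c ^ 2 := by
  simp [vertexA, vertexB, inner_toLp_three]
  ring

theorem inner_vertexA_pole : ⟪vertexA s c, pole⟫ = c := by
  simp [vertexA, pole, inner_toLp_three]

theorem inner_vertexB_pole : ⟪vertexB s c β, pole⟫ = -c := by
  simp [vertexB, pole, inner_toLp_three]

theorem cornerAngle_pole (hsc : s ^ 2 + c ^ 2 = 1) (hs : 0 < s) (hβ₀ : 0 ≤ β) (hβπ : β ≤ π) :
    cornerAngle pole (vertexA s c) (vertexB s c β) = β := by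
  refine cornerAngle_eq_of_sq norm_pole (norm_vertexA hsc) (norm_vertexB hsc) ?_ ?_ hβ₀ hβπ
    ?_ ?_ <;>
    simp only [inner_vertexA_pole, inner_vertexB_pole, real_inner_comm (vertexB s c β),
      inner_vertexB_vertexA]
  · nlinarith
  · nlinarith
  · nlinarith [sq_nonneg (s * cos β)]
  · linear_combination (s ^ 2 + 1 - c ^ 2) * cos β ^ 2 * hsc

theorem cornerAngle_vertexA (hsc : s ^ 2 + c ^ 2 = 1) (hs : 0 < s) (hc : 0 ≤ c) (hβ₀ : 0 < β)
    (hβπ : β < π) {α : ℝ} (hα : π / 2 ≤ α) (hαπ : α ≤ π)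
    (hrel : c ^ 2 * (1 + cos β) * sin α ^ 2 = (1 - cos β) * cos α ^ 2) :
    cornerAngle (vertexA s c) (vertexB s c β) pole = α := by
  have hs2 : s ^ 2 = 1 - c ^ 2 := by linarith
  have hcosβ₁ : cos β < 1 := by simpa using cos_lt_cos_of_nonneg_of_le_pi le_rfl hβπ.le hβ₀
  have hcosβ₂ : -1 < cos β := by simpa using cos_lt_cos_of_nonneg_of_le_pi hβ₀.le le_rfl hβπ
  have hcosα : cos α ≤ 0 := cos_nonpos_of_pi_div_two_le_of_le hα (by linarith)
  have h1p : 0 < 1 + (s ^ 2 * cos β - c ^ 2) := by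
    nlinarith [mul_pos (pow_pos hs 2) (by linarith : 0 < 1 + cos β)]
  have h1m : 0 < 1 - (s ^ 2 * cos β - c ^ 2) := by
    nlinarith [mul_nonneg (sq_nonneg c) (by linarith : 0 ≤ 1 + cos β)]
  refine cornerAngle_eq_of_sq (norm_vertexA hsc) (norm_vertexB hsc) norm_pole ?_ ?_
    (by linarith [pi_pos]) hαπ ?_ ?_ <;>
    simp only [inner_vertexB_vertexA, inner_vertexB_pole, real_inner_comm (vertexA s c) pole,
      inner_vertexA_pole]
  · nlinarith
  · nlinarith
  · nlinarith [mul_nonneg hc h1p.le]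
  · rw [hs2]
    linear_combination (1 + ((1 - c ^ 2) * cos β - c ^ 2)) * (1 - c ^ 2) *
      (hrel - c ^ 2 * (1 + cos β) * sin_sq_add_cos_sq α)

theorem cornerAngle_vertexB :
    cornerAngle (vertexB s c β) (vertexA s c) pole =
      π - cornerAngle (vertexA s c) (vertexB s c β) pole :=
  cornerAngle_eq_pi_sub_of_swap (halfTurn β) (halfTurn_vertexA s c β) (halfTurn_vertexB s c β)
    (halfTurn_pole β)

end Angles

/-- The height `tan m · |cot α|` of `vertexA` at which the angle there is `α`, when the angle at
the pole is `2 m`. -/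
def vertexHeight (m α : ℝ) : ℝ := -(sin m * cos α) / (cos m * sin α)

section VertexHeight

variable {m α : ℝ} (hm : 0 < m) (hmα : α + m < π) (hα : π / 2 < α)
include hm hmα hα

theorem vertexHeight_pos : 0 < vertexHeight m α := by
  have hcosα : cos α < 0 := cos_neg_of_pi_div_two_lt_of_lt hα (by linarith)
  have hsinm : 0 < sin m := sin_pos_of_pos_of_lt_pi hm (by linarith)
  have hcosm : 0 < cos m := cos_pos_of_mem_Ioo ⟨by linarith, by linarith⟩
  have hsinα : 0 < sin α := sin_pos_of_pos_of_lt_pi (by linarith) (by linarith)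
  exact div_pos (by nlinarith) (by positivity)

theorem vertexHeight_lt_one : vertexHeight m α < 1 := by
  have hcosm : 0 < cos m := cos_pos_of_mem_Ioo ⟨by linarith, by linarith⟩
  have hsinα : 0 < sin α := sin_pos_of_pos_of_lt_pi (by linarith) (by linarith)
  have hsin : 0 < sin (α + m) := sin_pos_of_pos_of_lt_pi (by linarith) hmα
  rw [vertexHeight, div_lt_one (by positivity)]
  rw [sin_add] at hsin
  linarith

theorem vertexHeight_sq_mul :
    vertexHeight m α ^ 2 * (1 + cos (2 * m)) * sin α ^ 2 = (1 - cos (2 * m)) * cos α ^ 2 := by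
  have hcosm : 0 < cos m := cos_pos_of_mem_Ioo ⟨by linarith, by linarith⟩
  have hsinα : 0 < sin α := sin_pos_of_pos_of_lt_pi (by linarith) (by linarith)
  have key : vertexHeight m α * (cos m * sin α) = -(sin m * cos α) :=
    div_mul_cancel₀ _ (by positivity)
  rw [cos_two_mul]
  linear_combination 2 * (vertexHeight m α * (cos m * sin α) - sin m * cos α) * key +
    2 * cos α ^ 2 * sin_sq_add_cos_sq m

theorem exists_cornerAngle_vertexA_eq :
    ∃ s c, 0 < s ∧ s ^ 2 + c ^ 2 = 1 ∧
      cornerAngle (vertexA s c) (vertexB s c (2 * m)) pole = α := by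
  have hc₀ := vertexHeight_pos hm hmα hα
  have hc₁ := vertexHeight_lt_one hm hmα hα
  have hsc : √(1 - vertexHeight m α ^ 2) ^ 2 + vertexHeight m α ^ 2 = 1 := by
    rw [sq_sqrt (by nlinarith)]
    ring
  refine ⟨_, _, sqrt_pos.mpr (by nlinarith), hsc, cornerAngle_vertexA hsc
    (sqrt_pos.mpr (by nlinarith)) hc₀.le (by linarith) (by linarith) hα.le (by linarith)
    (vertexHeight_sq_mul hm hmα hα)⟩

end VertexHeight

end

end EarthMapTiling

open EarthMapTiling in
/-- Existence of the two-layer earth map tilings with `2k` tiles, for a triangle with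
angles `(α, π − α, 2π/k)`. -/
theorem two_layer_earth_map_tiling (k : ℕ) (hk : 3 ≤ k) (α : ℝ)
    (h₁ : Real.pi / 2 < α) (h₂ : α < Real.pi - Real.pi / k) :
    ∃ A B C : EuclideanSpace ℝ (Fin 3),
      LinearIndependent ℝ ![A, B, C] ∧ ‖A‖ = 1 ∧ ‖B‖ = 1 ∧ ‖C‖ = 1 ∧
      cornerAngle A B C = α ∧
      cornerAngle B A C = Real.pi - α ∧
      cornerAngle C A B = 2 * Real.pi / k ∧
      ∃ T : Fin (2 * k) → Set (EuclideanSpace ℝ (Fin 3)),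
        (∀ i, ∃ g : EuclideanSpace ℝ (Fin 3) ≃ₗᵢ[ℝ] EuclideanSpace ℝ (Fin 3),
          T i = g '' sphericalTriangle A B C) ∧
        (⋃ i, T i) = Metric.sphere (0 : EuclideanSpace ℝ (Fin 3)) 1 ∧
        Pairwise fun i j => Disjoint
          (interior ((↑) ⁻¹' T i : Set (Metric.sphere (0 : EuclideanSpace ℝ (Fin 3)) 1)))
          (interior ((↑) ⁻¹' T j : Set (Metric.sphere (0 : EuclideanSpace ℝ (Fin 3)) 1))) := by
  have hk₀ : (0 : ℝ) < k := by exact_mod_cast (by omega : 0 < k)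
  have hk₃ : (3 : ℝ) ≤ k := by exact_mod_cast hk
  have hβ₀ : 0 < 2 * π / k := by positivity
  have hβπ : 2 * π / k < π := by
    rw [div_lt_iff₀ hk₀]
    nlinarith [pi_pos]
  obtain ⟨s, c, hs, hsc, hA⟩ := exists_cornerAngle_vertexA_eq (m := π / k) (by positivity)
    (by linarith) h₁
  rw [← mul_div_assoc] at hA
  exact ⟨vertexA s c, vertexB s c _, pole,
    linearIndependent_vertices hs (sin_pos_of_pos_of_lt_pi hβ₀ hβπ), norm_vertexA hsc,
    norm_vertexB hsc, norm_pole, hA, by rw [cornerAngle_vertexB, hA],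
    cornerAngle_pole hsc hs hβ₀.le hβπ.le,
    exists_tiling hs hβ₀ hβπ (mul_div_cancel₀ _ hk₀.ne')⟩
end
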